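/- arXiv:1102.3571 — 2 statements merged into one kernel-verified Lean document; each statement's English description precedes it below -/
import Mathlib

section
/- Let 𝒫 be a hereditary class of finite simple graphs and let W be a graphon such that there is no sequence of graphs in 𝒫 converging to W (equivalently, there exists a finite simple graph F₀ ∉ 𝒫 with t_ind(F₀,W) > 0). Then the sum, over all labelled simple graphs H on vertex set {1,…,n} that belong to 𝒫, of t_ind(H,W) tends to 0 as n → ∞. (Equivalently: P(G(n,W) ∈ 𝒫) → 0.) -/
open MeasureTheory Filter
open scoped Classical

noncomputable section

/-- A graphon: a symmetric measurable kernel with values in `[0,1]` on `[0,1]²`. -/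
def IsGraphon (W : ℝ → ℝ → ℝ) : Prop :=
  Measurable (Function.uncurry W) ∧
  (∀ x y, W x y = W y x) ∧
  (∀ x y, x ∈ Set.Icc (0:ℝ) 1 → y ∈ Set.Icc (0:ℝ) 1 → W x y ∈ Set.Icc (0:ℝ) 1)

/-- Lebesgue (product) measure on the cube `[0,1]ⁿ`. -/
def cubeMeasure (n : ℕ) : Measure (Fin n → ℝ) :=
  Measure.pi fun _ => volume.restrict (Set.Icc (0:ℝ) 1)

/-- Induced-subgraph density `t_ind(F, W)` of a graph `F` in a graphon `W`. -/
def tIndW {m : ℕ} (F : SimpleGraph (Fin m)) (W : ℝ → ℝ → ℝ) : ℝ :=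
  ∫ x : Fin m → ℝ,
    ∏ p ∈ Finset.univ.filter (fun p : Fin m × Fin m => p.1 < p.2),
      (if F.Adj p.1 p.2 then W (x p.1) (x p.2) else 1 - W (x p.1) (x p.2))
    ∂(cubeMeasure m)

/-- Induced-subgraph density `t_ind(F, G)` for finite labelled graphs:
the proportion of injections `Fin m ↪ Fin n` that are induced embeddings. -/
def tIndG {m n : ℕ} (F : SimpleGraph (Fin m)) (G : SimpleGraph (Fin n)) : ℝ :=
  ((Finset.univ.filter fun φ : Fin m ↪ Fin n =>
      ∀ u v, G.Adj (φ u) (φ v) ↔ F.Adj u v).card : ℝ) / (n.descFactorial m : ℝ)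

/-- A sequence of finite graphs converges to the graphon `W`:
the number of vertices tends to infinity and every induced density converges. -/
def ConvergesTo (G : ℕ → Σ n : ℕ, SimpleGraph (Fin n)) (W : ℝ → ℝ → ℝ) : Prop :=
  Tendsto (fun k => (G k).1) atTop atTop ∧
  ∀ (m : ℕ) (F : SimpleGraph (Fin m)),
    Tendsto (fun k => tIndG F (G k).2) atTop (nhds (tIndW F W))

/-- `F` is isomorphic to an induced subgraph of `G`. -/
def IsInducedSubgraph {m n : ℕ} (F : SimpleGraph (Fin m)) (G : SimpleGraph (Fin n)) : Prop :=
  ∃ φ : Fin m ↪ Fin n, ∀ u v, G.Adj (φ u) (φ v) ↔ F.Adj u v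

/-- A hereditary graph class: closed under isomorphism and induced subgraphs. -/
def Hereditary (P : ∀ n : ℕ, Set (SimpleGraph (Fin n))) : Prop :=
  ∀ (m n : ℕ) (F : SimpleGraph (Fin m)) (G : SimpleGraph (Fin n)),
    G ∈ P n → IsInducedSubgraph F G → F ∈ P m

namespace GP

instance cubeProb (n : ℕ) : IsProbabilityMeasure (cubeMeasure n) := by
  have : IsProbabilityMeasure (volume.restrict (Set.Icc (0:ℝ) 1)) := by
    constructor
    simp [Real.volume_Icc]
  exact MeasureTheory.Measure.pi.instIsProbabilityMeasure (μ := fun _ : Fin n => volume.restrict (Set.Icc (0:ℝ) 1))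

/-- the index type of (ordered) pairs -/
abbrev PairIdx (n : ℕ) := {p : Fin n × Fin n // p.1 < p.2}

/-- edge factor indexed by a boolean -/
def gq (W : ℝ → ℝ → ℝ) {n : ℕ} (q : PairIdx n) (b : Bool) (x : Fin n → ℝ) : ℝ :=
  if b then W (x q.1.1) (x q.1.2) else 1 - W (x q.1.1) (x q.1.2)

/-- graph integrand -/
def wg (W : ℝ → ℝ → ℝ) {n : ℕ} (H : SimpleGraph (Fin n)) (x : Fin n → ℝ) : ℝ :=
  ∏ q : PairIdx n, gq W q (decide (H.Adj q.1.1 q.1.2)) x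

lemma tIndW_eq_integral_wg {n : ℕ} (F : SimpleGraph (Fin n)) (W : ℝ → ℝ → ℝ) :
    tIndW F W = ∫ x, wg W F x ∂(cubeMeasure n) := by
  unfold tIndW wg
  congr 1
  funext x
  rw [Finset.prod_subtype (Finset.univ.filter (fun p : Fin n × Fin n => p.1 < p.2))
    (p := fun p : Fin n × Fin n => p.1 < p.2)
    (fun p => by simp) (fun p => if F.Adj p.1 p.2 then W (x p.1) (x p.2) else 1 - W (x p.1) (x p.2))]
  apply Finset.prod_congr rfl
  intro q _
  simp [gq]

lemma measurable_gq {W : ℝ → ℝ → ℝ} (hW : IsGraphon W) {n : ℕ} (q : PairIdx n) (b : Bool) :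
    Measurable (gq W q b) := by
  have h : Measurable (fun x : Fin n → ℝ => W (x q.1.1) (x q.1.2)) := by
    have := hW.1.comp (f := fun x : Fin n → ℝ => (x q.1.1, x q.1.2))
      ((measurable_pi_apply _).prodMk (measurable_pi_apply _))
    exact this
  cases b
  · show Measurable ((fun _ : Fin n → ℝ => (1:ℝ)) - fun x : Fin n → ℝ => W (x q.1.1) (x q.1.2))
    exact measurable_const.sub h
  · exact h

lemma measurable_wg {W : ℝ → ℝ → ℝ} (hW : IsGraphon W) {n : ℕ} (H : SimpleGraph (Fin n)) :
    Measurable (wg W H) := by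
  apply Finset.measurable_prod
  intro q _
  exact measurable_gq hW q _

lemma ae_mem_cube (n : ℕ) :
    ∀ᵐ x ∂cubeMeasure n, ∀ i, x i ∈ Set.Icc (0:ℝ) 1 := by
  have h : (cubeMeasure n) (Set.univ.pi fun _ => Set.Icc (0:ℝ) 1)ᶜ = 0 := by
    rw [measure_compl (MeasurableSet.univ_pi fun _ => measurableSet_Icc) (measure_ne_top _ _)]
    rw [cubeMeasure, Measure.pi_pi]
    have : (volume.restrict (Set.Icc (0:ℝ) 1)) (Set.Icc (0:ℝ) 1) = 1 := by
      simp [Real.volume_Icc]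
    simp only [this, Finset.prod_const_one]
    have h1 : (cubeMeasure n) Set.univ = 1 := measure_univ
    rw [cubeMeasure] at h1
    rw [h1]
    simp
  filter_upwards [measure_eq_zero_iff_ae_notMem.mp h] with x hx
  intro i
  by_contra hc
  exact hx (fun hmem => hc (hmem i (Set.mem_univ i)))

lemma gq_mem_unit {W : ℝ → ℝ → ℝ} (hW : IsGraphon W) {n : ℕ} (q : PairIdx n) (b : Bool)
    {x : Fin n → ℝ} (hx : ∀ i, x i ∈ Set.Icc (0:ℝ) 1) :
    gq W q b x ∈ Set.Icc (0:ℝ) 1 := by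
  have h := hW.2.2 (x q.1.1) (x q.1.2) (hx _) (hx _)
  cases b <;> simp [gq] at h ⊢ <;> constructor <;> linarith [h.1, h.2]

lemma wg_mem_unit {W : ℝ → ℝ → ℝ} (hW : IsGraphon W) {n : ℕ} (H : SimpleGraph (Fin n))
    {x : Fin n → ℝ} (hx : ∀ i, x i ∈ Set.Icc (0:ℝ) 1) :
    wg W H x ∈ Set.Icc (0:ℝ) 1 := by
  constructor
  · exact Finset.prod_nonneg fun q _ => (gq_mem_unit hW q _ hx).1
  · exact Finset.prod_le_one (fun q _ => (gq_mem_unit hW q _ hx).1)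
      (fun q _ => (gq_mem_unit hW q _ hx).2)

lemma integrable_wg {W : ℝ → ℝ → ℝ} (hW : IsGraphon W) {n : ℕ} (H : SimpleGraph (Fin n)) :
    Integrable (wg W H) (cubeMeasure n) := by
  apply (integrable_const (1:ℝ)).mono' (measurable_wg hW H).aestronglyMeasurable
  filter_upwards [ae_mem_cube n] with x hx
  have h := wg_mem_unit hW H hx
  rw [Real.norm_eq_abs, abs_of_nonneg h.1]
  exact h.2

lemma tIndW_nonneg {W : ℝ → ℝ → ℝ} (hW : IsGraphon W) {n : ℕ} (H : SimpleGraph (Fin n)) :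
    0 ≤ tIndW H W := by
  rw [tIndW_eq_integral_wg]
  apply integral_nonneg_of_ae
  filter_upwards [ae_mem_cube n] with x hx
  exact (wg_mem_unit hW H hx).1

lemma tIndW_le_one {W : ℝ → ℝ → ℝ} (hW : IsGraphon W) {n : ℕ} (H : SimpleGraph (Fin n)) :
    tIndW H W ≤ 1 := by
  rw [tIndW_eq_integral_wg]
  calc ∫ x, wg W H x ∂(cubeMeasure n) ≤ ∫ _x, (1:ℝ) ∂(cubeMeasure n) := by
        apply integral_mono_ae (integrable_wg hW H) (integrable_const 1)
        filter_upwards [ae_mem_cube n] with x hx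
        exact (wg_mem_unit hW H hx).2
    _ = 1 := by simp

end GP

namespace GP

lemma sum_bool_cond {ι : Type*} [Fintype ι] [DecidableEq ι] (T : Finset ι) (t₀ : ι → Bool)
    (g : ι → Bool → ℝ) :
    ∑ f ∈ Finset.univ.filter (fun f : ι → Bool => ∀ i ∈ T, f i = t₀ i), ∏ i, g i (f i)
      = (∏ i ∈ T, g i (t₀ i)) * ∏ i ∈ Tᶜ, (g i true + g i false) := by
  classical
  have h1 : Finset.univ.filter (fun f : ι → Bool => ∀ i ∈ T, f i = t₀ i)
      = Fintype.piFinset (fun i => if i ∈ T then {t₀ i} else Finset.univ) := by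
    ext f
    simp only [Finset.mem_filter, Finset.mem_univ, true_and, Fintype.mem_piFinset]
    constructor
    · intro h i
      by_cases hi : i ∈ T
      · simp [hi, h i hi]
      · simp [hi]
    · intro h i hi
      have := h i
      simp [hi] at this
      exact this
  rw [h1, ← Finset.prod_univ_sum]
  have h2 : ∀ i, (∑ j ∈ (if i ∈ T then ({t₀ i} : Finset Bool) else Finset.univ), g i j)
      = if i ∈ T then g i (t₀ i) else (g i true + g i false) := by
    intro i
    by_cases hi : i ∈ T
    · simp [hi]
    · simp only [hi, if_false]
      rw [Fintype.sum_bool]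
  simp_rw [h2]
  rw [Finset.prod_ite]
  congr 1
  · apply Finset.prod_congr _ (fun _ _ => rfl)
    ext i; simp
  · apply Finset.prod_congr _ (fun _ _ => rfl)
    ext i; simp

/-- graphs on `Fin n` correspond to boolean functions on ordered pairs -/
def graphEquiv (n : ℕ) : SimpleGraph (Fin n) ≃ (PairIdx n → Bool) where
  toFun H q := decide (H.Adj q.1.1 q.1.2)
  invFun f := SimpleGraph.fromRel (fun a b => ∃ h : a < b, f ⟨(a, b), h⟩ = true)
  left_inv H := by
    ext a b
    simp only [SimpleGraph.fromRel_adj, decide_eq_true_eq]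
    constructor
    · rintro ⟨hne, ⟨h, hf⟩ | ⟨h, hf⟩⟩
      · exact hf
      · exact H.adj_symm hf
    · intro h
      refine ⟨H.ne_of_adj h, ?_⟩
      rcases lt_or_gt_of_ne (H.ne_of_adj h) with hlt | hgt
      · exact Or.inl ⟨hlt, h⟩
      · exact Or.inr ⟨hgt, H.adj_symm h⟩
  right_inv f := by
    funext q
    obtain ⟨⟨a, b⟩, hab⟩ := q
    simp only [SimpleGraph.fromRel_adj]
    have hne : a ≠ b := ne_of_lt hab
    by_cases hf : f ⟨(a, b), hab⟩ = true
    · rw [hf]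
      exact decide_eq_true ⟨hne, Or.inl ⟨hab, hf⟩⟩
    · have hfb : f ⟨(a, b), hab⟩ = false := by
        cases h : f ⟨(a, b), hab⟩
        · rfl
        · exact absurd h hf
      rw [hfb]
      apply decide_eq_false
      rintro ⟨-, ⟨h, hf'⟩ | ⟨h, hf'⟩⟩
      · exact hf hf'
      · exact absurd h (not_lt.mpr (le_of_lt hab))

lemma wg_eq_prod_graphEquiv {W : ℝ → ℝ → ℝ} {n : ℕ} (H : SimpleGraph (Fin n)) (x : Fin n → ℝ) :
    wg W H x = ∏ q : PairIdx n, gq W q (graphEquiv n H q) x := rfl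

/-- Master lemma: sum of `wg` over graphs with prescribed adjacency on a set `T` of pairs. -/
lemma sum_wg_cond {W : ℝ → ℝ → ℝ} {n : ℕ} (T : Finset (PairIdx n)) (t₀ : PairIdx n → Bool)
    (x : Fin n → ℝ) :
    ∑ H ∈ Finset.univ.filter
        (fun H : SimpleGraph (Fin n) => ∀ q ∈ T, decide (H.Adj q.1.1 q.1.2) = t₀ q),
      wg W H x
      = ∏ q ∈ T, gq W q (t₀ q) x := by
  classical
  have key := sum_bool_cond T t₀ (fun q b => gq W q b x)
  have htrans : ∑ H ∈ Finset.univ.filter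
        (fun H : SimpleGraph (Fin n) => ∀ q ∈ T, decide (H.Adj q.1.1 q.1.2) = t₀ q),
      wg W H x
      = ∑ f ∈ Finset.univ.filter (fun f : PairIdx n → Bool => ∀ q ∈ T, f q = t₀ q),
        ∏ q : PairIdx n, gq W q (f q) x := by
    apply Finset.sum_nbij' (i := fun H => graphEquiv n H) (j := fun f => (graphEquiv n).symm f)
    · intro H hH
      simp only [Finset.mem_filter, Finset.mem_univ, true_and] at hH ⊢
      exact hH
    · intro f hf
      simp only [Finset.mem_filter, Finset.mem_univ, true_and] at hf ⊢
      intro q hq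
      have : decide (((graphEquiv n).symm f).Adj q.1.1 q.1.2) = graphEquiv n ((graphEquiv n).symm f) q := rfl
      rw [this, (graphEquiv n).apply_symm_apply]
      exact hf q hq
    · intro H _; exact (graphEquiv n).symm_apply_apply H
    · intro f _; exact (graphEquiv n).apply_symm_apply f
    · intro H _; rfl
  rw [htrans, key]
  have hone : ∏ q ∈ Tᶜ, (gq W q true x + gq W q false x) = 1 := by
    apply Finset.prod_eq_one
    intro q _
    simp [gq]
  rw [hone, mul_one]

/-- Sum over all graphs of `wg` is one. -/
lemma sum_wg_all {W : ℝ → ℝ → ℝ} {n : ℕ} (x : Fin n → ℝ) :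
    ∑ H : SimpleGraph (Fin n), wg W H x = 1 := by
  classical
  have h := sum_wg_cond (W := W) (∅ : Finset (PairIdx n)) (fun _ => true) x
  simpa using h

lemma sum_tIndW_all {W : ℝ → ℝ → ℝ} (hW : IsGraphon W) (n : ℕ) :
    ∑ H : SimpleGraph (Fin n), tIndW H W = 1 := by
  classical
  have : ∑ H : SimpleGraph (Fin n), tIndW H W
      = ∫ x, (∑ H : SimpleGraph (Fin n), wg W H x) ∂(cubeMeasure n) := by
    rw [integral_finset_sum _ (fun H _ => integrable_wg hW H)]
    exact Finset.sum_congr rfl (fun H _ => tIndW_eq_integral_wg H W)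
  rw [this]
  simp_rw [sum_wg_all]
  simp

end GP

namespace GP

/-- pairs lying within the range of an embedding -/
def Tset {m n : ℕ} (φ : Fin m ↪ Fin n) : Finset (PairIdx n) :=
  Finset.univ.filter (fun q => q.1.1 ∈ Set.range φ ∧ q.1.2 ∈ Set.range φ)

/-- prescribed adjacency pattern induced by `F` through `φ` -/
def tb {m n : ℕ} (φ : Fin m ↪ Fin n) (F : SimpleGraph (Fin m)) (q : PairIdx n) : Bool :=
  decide (∃ u v, φ u = q.1.1 ∧ φ v = q.1.2 ∧ F.Adj u v)

lemma cond_iff {m n : ℕ} (φ : Fin m ↪ Fin n) (F : SimpleGraph (Fin m))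
    (H : SimpleGraph (Fin n)) :
    (∀ u v, H.Adj (φ u) (φ v) ↔ F.Adj u v)
      ↔ ∀ q ∈ Tset φ, decide (H.Adj q.1.1 q.1.2) = tb φ F q := by
  constructor
  · intro h q hq
    simp only [Tset, Finset.mem_filter, Finset.mem_univ, true_and] at hq
    obtain ⟨⟨u, hu⟩, ⟨v, hv⟩⟩ := hq
    unfold tb
    rw [decide_eq_decide]
    constructor
    · intro hH
      refine ⟨u, v, hu, hv, ?_⟩
      rw [← h u v, hu, hv]
      exact hH
    · rintro ⟨u', v', hu', hv', hF⟩
      have := (h u' v').mpr hF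
      rwa [hu', hv'] at this
  · intro h u v
    rcases lt_trichotomy (φ u) (φ v) with hlt | heq | hgt
    · have hq : (⟨(φ u, φ v), hlt⟩ : PairIdx n) ∈ Tset φ := by simp [Tset]
      have h1 := h _ hq
      unfold tb at h1
      have h2 := decide_eq_decide.mp h1
      simp only at h2
      rw [h2]
      constructor
      · rintro ⟨u', v', hu', hv', hF⟩
        rwa [φ.injective hu', φ.injective hv'] at hF
      · intro hF; exact ⟨u, v, rfl, rfl, hF⟩
    · have huv : u = v := φ.injective heq
      subst huv
      simp
    · have hq : (⟨(φ v, φ u), hgt⟩ : PairIdx n) ∈ Tset φ := by simp [Tset]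
      have h1 := h _ hq
      unfold tb at h1
      have h2 := decide_eq_decide.mp h1
      simp only at h2
      rw [H.adj_comm, h2]
      constructor
      · rintro ⟨u', v', hu', hv', hF⟩
        rw [φ.injective hu', φ.injective hv'] at hF
        rwa [F.adj_comm]
      · intro hF; exact ⟨v, u, rfl, rfl, F.adj_symm hF⟩

lemma prod_tb {W : ℝ → ℝ → ℝ} (hW : IsGraphon W) {m n : ℕ} (φ : Fin m ↪ Fin n)
    (F : SimpleGraph (Fin m)) (x : Fin n → ℝ) :
    ∏ q ∈ Tset φ, gq W q (tb φ F q) x = wg W F (x ∘ φ) := by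
  classical
  rw [wg_eq_prod_graphEquiv]
  symm
  set i : PairIdx m → PairIdx n := fun q' => if h : φ q'.1.1 < φ q'.1.2 then
      ⟨(φ q'.1.1, φ q'.1.2), h⟩ else
      ⟨(φ q'.1.2, φ q'.1.1), by
        rcases lt_or_gt_of_ne (fun he => (ne_of_lt q'.2) (φ.injective he)) with h1 | h1
        · exact absurd h1 h
        · exact h1⟩ with hidef
  have hpair : ∀ q' : PairIdx m,
      (i q').1 = (φ q'.1.1, φ q'.1.2) ∨ (i q').1 = (φ q'.1.2, φ q'.1.1) := by
    intro q'
    by_cases h : φ q'.1.1 < φ q'.1.2 <;> simp [hidef, h]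
  have hi : ∀ q' : PairIdx m, i q' ∈ Tset φ := by
    intro q'
    rcases hpair q' with h | h <;> (simp only [Tset, Finset.mem_filter, Finset.mem_univ, true_and, h]) <;>
      exact ⟨⟨_, rfl⟩, ⟨_, rfl⟩⟩
  apply Finset.prod_nbij i
  · intro q' _; exact hi q'
  · intro q1 _ q2 _ heq
    obtain ⟨⟨a1, b1⟩, hlt1⟩ := q1
    obtain ⟨⟨a2, b2⟩, hlt2⟩ := q2
    have e1 := hpair ⟨(a1, b1), hlt1⟩
    have e2 := hpair ⟨(a2, b2), hlt2⟩
    simp only at e1 e2 hlt1 hlt2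
    have hv : (i ⟨(a1, b1), hlt1⟩).1 = (i ⟨(a2, b2), hlt2⟩).1 := by rw [heq]
    apply Subtype.ext
    rcases e1 with e1 | e1 <;> rcases e2 with e2 | e2 <;> rw [e1, e2] at hv <;>
      (have h1 := φ.injective (congrArg Prod.fst hv) ;
       have h2 := φ.injective (congrArg Prod.snd hv))
    · exact Prod.ext h1 h2
    · exfalso
      have hb : b1 < b2 := by rw [h2]; exact hlt2
      rw [← h1] at hb
      exact lt_irrefl _ (hlt1.trans hb)
    · exfalso
      have hb : b1 < b2 := by rw [h1]; exact hlt2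
      rw [← h2] at hb
      exact lt_irrefl _ (hlt1.trans hb)
    · exact Prod.ext h2 h1
  · intro q hq
    have hq' : q ∈ Tset φ := hq
    simp only [Tset, Finset.mem_filter, Finset.mem_univ, true_and] at hq'
    obtain ⟨⟨u, hu⟩, ⟨v, hv⟩⟩ := hq'
    have hne : u ≠ v := by
      intro he; subst he
      rw [hu] at hv
      exact (ne_of_lt q.2) (hv ▸ rfl)
    rcases lt_or_gt_of_ne hne with hlt | hgt
    · refine ⟨⟨(u, v), hlt⟩, Finset.mem_coe.mpr (Finset.mem_univ _), ?_⟩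
      have hφ : φ u < φ v := by rw [hu, hv]; exact q.2
      simp only [hidef]
      rw [dif_pos hφ]
      apply Subtype.ext
      simp [hu, hv]
    · refine ⟨⟨(v, u), hgt⟩, Finset.mem_coe.mpr (Finset.mem_univ _), ?_⟩
      have hnlt : ¬ (φ v < φ u) := by rw [hu, hv]; exact not_lt.mpr (le_of_lt q.2)
      simp only [hidef]
      rw [dif_neg hnlt]
      apply Subtype.ext
      simp [hu, hv]
  · intro q' _
    obtain ⟨⟨u, v⟩, huv⟩ := q'
    by_cases h : φ u < φ v
    · simp only [hidef, dif_pos h]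
      have htb : tb φ F ⟨(φ u, φ v), h⟩ = graphEquiv m F ⟨(u, v), huv⟩ := by
        unfold tb graphEquiv
        simp only [Equiv.coe_fn_mk]
        rw [decide_eq_decide]
        constructor
        · rintro ⟨u', v', hu', hv', hF⟩
          rwa [φ.injective hu', φ.injective hv'] at hF
        · intro hF; exact ⟨u, v, rfl, rfl, hF⟩
      rw [htb]
      rfl
    · simp only [hidef, dif_neg h]
      have hgt : φ v < φ u := by
        rcases lt_or_gt_of_ne (fun he => (ne_of_lt huv) (φ.injective he)) with h1 | h1
        · exact absurd h1 h
        · exact h1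
      have htb : tb φ F ⟨(φ v, φ u), hgt⟩ = graphEquiv m F ⟨(u, v), huv⟩ := by
        unfold tb graphEquiv
        simp only [Equiv.coe_fn_mk]
        rw [decide_eq_decide]
        constructor
        · rintro ⟨u', v', hu', hv', hF⟩
          rw [φ.injective hu', φ.injective hv'] at hF
          exact F.adj_symm hF
        · intro hF; exact ⟨v, u, rfl, rfl, F.adj_symm hF⟩
      rw [htb]
      unfold gq
      simp only []
      rw [hW.2.1 ((x ∘ φ) u) ((x ∘ φ) v)]
      rfl

/-- KEY: pointwise sum of `wg` over graphs in which `φ` is an induced copy of `F`. -/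
lemma sum_wg_ind {W : ℝ → ℝ → ℝ} (hW : IsGraphon W) {m n : ℕ} (φ : Fin m ↪ Fin n)
    (F : SimpleGraph (Fin m)) (x : Fin n → ℝ) :
    ∑ H ∈ Finset.univ.filter
        (fun H : SimpleGraph (Fin n) => ∀ u v, H.Adj (φ u) (φ v) ↔ F.Adj u v),
      wg W H x = wg W F (x ∘ φ) := by
  classical
  have hfil : Finset.univ.filter
        (fun H : SimpleGraph (Fin n) => ∀ u v, H.Adj (φ u) (φ v) ↔ F.Adj u v)
      = Finset.univ.filter
        (fun H : SimpleGraph (Fin n) => ∀ q ∈ Tset φ, decide (H.Adj q.1.1 q.1.2) = tb φ F q) := by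
    ext H
    simp only [Finset.mem_filter, Finset.mem_univ, true_and]
    exact cond_iff φ F H
  rw [hfil, sum_wg_cond, prod_tb hW]

lemma Tset_disjoint {m m' n : ℕ} (φ : Fin m ↪ Fin n) (ψ : Fin m' ↪ Fin n)
    (hd : ∀ u v, φ u ≠ ψ v) : Disjoint (Tset φ) (Tset ψ) := by
  rw [Finset.disjoint_left]
  intro q hq hq'
  simp only [Tset, Finset.mem_filter, Finset.mem_univ, true_and] at hq hq'
  obtain ⟨⟨u, hu⟩, -⟩ := hq
  obtain ⟨⟨u', hu'⟩, -⟩ := hq'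
  exact hd u u' (hu.trans hu'.symm)

/-- KEY2: two disjoint induced copies. -/
lemma sum_wg_ind_two {W : ℝ → ℝ → ℝ} (hW : IsGraphon W) {m m' n : ℕ}
    (φ : Fin m ↪ Fin n) (ψ : Fin m' ↪ Fin n) (hd : ∀ u v, φ u ≠ ψ v)
    (F : SimpleGraph (Fin m)) (F' : SimpleGraph (Fin m')) (x : Fin n → ℝ) :
    ∑ H ∈ Finset.univ.filter
        (fun H : SimpleGraph (Fin n) =>
          (∀ u v, H.Adj (φ u) (φ v) ↔ F.Adj u v) ∧ (∀ u v, H.Adj (ψ u) (ψ v) ↔ F'.Adj u v)),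
      wg W H x = wg W F (x ∘ φ) * wg W F' (x ∘ ψ) := by
  classical
  have hdisj := Tset_disjoint φ ψ hd
  have hfil : Finset.univ.filter
        (fun H : SimpleGraph (Fin n) =>
          (∀ u v, H.Adj (φ u) (φ v) ↔ F.Adj u v) ∧ (∀ u v, H.Adj (ψ u) (ψ v) ↔ F'.Adj u v))
      = Finset.univ.filter
        (fun H : SimpleGraph (Fin n) =>
          ∀ q ∈ Tset φ ∪ Tset ψ, decide (H.Adj q.1.1 q.1.2)
            = if q ∈ Tset φ then tb φ F q else tb ψ F' q) := by
    ext H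
    simp only [Finset.mem_filter, Finset.mem_univ, true_and]
    constructor
    · rintro ⟨h1, h2⟩ q hq
      rcases Finset.mem_union.mp hq with hq | hq
      · rw [if_pos hq]
        exact (cond_iff φ F H).mp h1 q hq
      · have hnot : q ∉ Tset φ := Finset.disjoint_right.mp hdisj hq
        rw [if_neg hnot]
        exact (cond_iff ψ F' H).mp h2 q hq
    · intro h
      constructor
      · apply (cond_iff φ F H).mpr
        intro q hq
        have := h q (Finset.mem_union_left _ hq)
        rwa [if_pos hq] at this
      · apply (cond_iff ψ F' H).mpr
        intro q hq
        have hnot : q ∉ Tset φ := Finset.disjoint_right.mp hdisj hq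
        have := h q (Finset.mem_union_right _ hq)
        rwa [if_neg hnot] at this
  rw [hfil, sum_wg_cond, Finset.prod_union hdisj]
  congr 1
  · rw [← prod_tb hW φ F x]
    apply Finset.prod_congr rfl
    intro q hq
    rw [if_pos hq]
  · rw [← prod_tb hW ψ F' x]
    apply Finset.prod_congr rfl
    intro q hq
    have hnot : q ∉ Tset φ := Finset.disjoint_right.mp hdisj hq
    rw [if_neg hnot]

end GP

namespace GP

lemma mp_fst {α β : Type*} [MeasurableSpace α] [MeasurableSpace β]
    (μ : Measure α) (ν : Measure β) [SigmaFinite ν] (hν : ν Set.univ = 1) :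
    MeasurePreserving (Prod.fst : α × β → α) (μ.prod ν) μ := by
  constructor
  · exact measurable_fst
  · rw [Measure.map_fst_prod, hν, one_smul]

lemma measurePreserving_proj {m n : ℕ} (φ : Fin m ↪ Fin n) :
    MeasurePreserving (fun x : Fin n → ℝ => fun u => x (φ u))
      (cubeMeasure n) (cubeMeasure m) := by
  classical
  set ν := volume.restrict (Set.Icc (0:ℝ) 1) with hν
  have hν1 : ν Set.univ = 1 := by simp [hν, Real.volume_Icc]
  set p : Fin n → Prop := fun a => a ∈ Set.range φ with hp
  letI instP : Fintype {a // p a} := Subtype.fintype p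
  letI instNP : Fintype {a // ¬ p a} := Subtype.fintype _
  have h1 := MeasureTheory.measurePreserving_piEquivPiSubtypeProd
    (fun _ : Fin n => ν) p
  have hpiν : (Measure.pi fun _ : {a // ¬ p a} => ν) Set.univ = 1 := by
    rw [Measure.pi_univ]
    simp [hν1]
  have hfst := mp_fst (Measure.pi fun _ : {a // p a} => ν)
    (Measure.pi fun _ : {a // ¬ p a} => ν) hpiν
  set f : {a // p a} ≃ Fin m := (Equiv.ofInjective φ φ.injective).symm with hf
  have h2 := MeasureTheory.measurePreserving_piCongrLeft (fun _ : Fin m => ν) f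
  have hcomp := h2.comp (hfst.comp h1)
  have heq : (fun x : Fin n → ℝ => fun u => x (φ u))
      = (MeasurableEquiv.piCongrLeft (fun _ : Fin m => ℝ) f)
        ∘ Prod.fst ∘ (MeasurableEquiv.piEquivPiSubtypeProd (fun _ : Fin n => ℝ) p) := by
    funext x
    funext u
    show x (φ u)
      = (MeasurableEquiv.piCongrLeft (fun _ : Fin m => ℝ) f)
          (((MeasurableEquiv.piEquivPiSubtypeProd (fun _ : Fin n => ℝ) p) x).1) u
    have hfa : f (⟨φ u, ⟨u, rfl⟩⟩ : {a // p a}) = u := by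
      rw [hf]
      exact Equiv.ofInjective_symm_apply φ.injective u
    rw [MeasurableEquiv.coe_piCongrLeft]
    conv_rhs => rw [← hfa]
    rw [Equiv.piCongrLeft_apply_apply]
    rfl
  rw [heq]
  exact hcomp

lemma integral_proj {m n : ℕ} (φ : Fin m ↪ Fin n) {g : (Fin m → ℝ) → ℝ}
    (hg : Measurable g) :
    ∫ x, g (fun u => x (φ u)) ∂cubeMeasure n = ∫ y, g y ∂cubeMeasure m := by
  have h := measurePreserving_proj φ
  rw [← h.map_eq]
  rw [integral_map h.measurable.aemeasurable hg.aestronglyMeasurable]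

/-- the canonical "left" equiv for a split of coordinates -/
def eqL (r m : ℕ) : Fin r ≃ {a : Fin (r + m) // (a : ℕ) < r} where
  toFun u := ⟨Fin.castAdd m u, by simp⟩
  invFun a := ⟨a.1.1, a.2⟩
  left_inv u := by ext; simp
  right_inv a := by ext; simp

def eqR (r m : ℕ) : Fin m ≃ {a : Fin (r + m) // ¬ ((a : ℕ) < r)} where
  toFun v := ⟨Fin.natAdd r v, by simp⟩
  invFun a := ⟨a.1.1 - r, by have := a.1.2; have := a.2; omega⟩
  left_inv v := by ext; simp
  right_inv a := by ext; have := a.2; simp; omega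

lemma measurePreserving_split (r m : ℕ) :
    MeasurePreserving
      (fun x : Fin (r + m) → ℝ =>
        ((fun u => x (Fin.castAdd m u), fun v => x (Fin.natAdd r v)) :
          (Fin r → ℝ) × (Fin m → ℝ)))
      (cubeMeasure (r + m)) ((cubeMeasure r).prod (cubeMeasure m)) := by
  classical
  set ν := volume.restrict (Set.Icc (0:ℝ) 1) with hν
  set p : Fin (r + m) → Prop := fun a => (a : ℕ) < r with hp
  have h1 := MeasureTheory.measurePreserving_piEquivPiSubtypeProd
    (fun _ : Fin (r + m) => ν) p
  have h2L := MeasureTheory.measurePreserving_piCongrLeft (fun _ : Fin r => ν) (eqL r m).symm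
  have h2R := MeasureTheory.measurePreserving_piCongrLeft (fun _ : Fin m => ν) (eqR r m).symm
  have hcomp := (h2L.prod h2R).comp h1
  have heq : (fun x : Fin (r + m) → ℝ =>
        ((fun u => x (Fin.castAdd m u), fun v => x (Fin.natAdd r v)) :
          (Fin r → ℝ) × (Fin m → ℝ)))
      = (Prod.map (MeasurableEquiv.piCongrLeft (fun _ : Fin r => ℝ) (eqL r m).symm)
          (MeasurableEquiv.piCongrLeft (fun _ : Fin m => ℝ) (eqR r m).symm))
        ∘ (MeasurableEquiv.piEquivPiSubtypeProd (fun _ : Fin (r + m) => ℝ) p) := by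
    funext x
    apply Prod.ext
    · funext u
      show x (Fin.castAdd m u)
        = (MeasurableEquiv.piCongrLeft (fun _ : Fin r => ℝ) (eqL r m).symm)
            (fun a : {a // p a} => x a.1) u
      have hfa : (eqL r m).symm (eqL r m u) = u := by simp
      rw [MeasurableEquiv.coe_piCongrLeft]
      conv_rhs => rw [← hfa]
      rw [Equiv.piCongrLeft_apply_apply]
      rfl
    · funext v
      show x (Fin.natAdd r v)
        = (MeasurableEquiv.piCongrLeft (fun _ : Fin m => ℝ) (eqR r m).symm)
            (fun a : {a // ¬ p a} => x a.1) v
      have hfa : (eqR r m).symm (eqR r m v) = v := by simp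
      rw [MeasurableEquiv.coe_piCongrLeft]
      conv_rhs => rw [← hfa]
      rw [Equiv.piCongrLeft_apply_apply]
      rfl
  rw [heq]
  exact hcomp

lemma integral_split {r m : ℕ} {A : (Fin r → ℝ) → ℝ} {B : (Fin m → ℝ) → ℝ}
    (hA : Measurable A) (hB : Measurable B) :
    ∫ x, A (fun u => x (Fin.castAdd m u)) * B (fun v => x (Fin.natAdd r v))
        ∂cubeMeasure (r + m)
      = (∫ y, A y ∂cubeMeasure r) * ∫ z, B z ∂cubeMeasure m := by
  have h := measurePreserving_split r m
  have key : ∫ z, A z.1 * B z.2 ∂((cubeMeasure r).prod (cubeMeasure m))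
      = ∫ x, A (fun u => x (Fin.castAdd m u)) * B (fun v => x (Fin.natAdd r v))
          ∂cubeMeasure (r + m) := by
    rw [← h.map_eq]
    rw [integral_map h.measurable.aemeasurable
      (show AEStronglyMeasurable (fun z : (Fin r → ℝ) × (Fin m → ℝ) => A z.1 * B z.2) _ from
        (Measurable.aestronglyMeasurable (by exact (hA.comp measurable_fst).mul (hB.comp measurable_snd))))]
  rw [← key, MeasureTheory.integral_prod_mul]

end GP

namespace GP

lemma sum_tIndW_ind {W : ℝ → ℝ → ℝ} (hW : IsGraphon W) {m n : ℕ} (φ : Fin m ↪ Fin n)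
    (F : SimpleGraph (Fin m)) :
    ∑ H ∈ Finset.univ.filter
        (fun H : SimpleGraph (Fin n) => ∀ u v, H.Adj (φ u) (φ v) ↔ F.Adj u v),
      tIndW H W = tIndW F W := by
  classical
  have h1 : ∑ H ∈ Finset.univ.filter
        (fun H : SimpleGraph (Fin n) => ∀ u v, H.Adj (φ u) (φ v) ↔ F.Adj u v),
      tIndW H W
      = ∫ x, (∑ H ∈ Finset.univ.filter
        (fun H : SimpleGraph (Fin n) => ∀ u v, H.Adj (φ u) (φ v) ↔ F.Adj u v),
          wg W H x) ∂(cubeMeasure n) := by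
    rw [integral_finset_sum _ (fun H _ => integrable_wg hW H)]
    exact Finset.sum_congr rfl (fun H _ => tIndW_eq_integral_wg H W)
  rw [h1]
  have h2 : ∀ x, (∑ H ∈ Finset.univ.filter
        (fun H : SimpleGraph (Fin n) => ∀ u v, H.Adj (φ u) (φ v) ↔ F.Adj u v),
          wg W H x) = wg W F (fun u => x (φ u)) := by
    intro x
    rw [sum_wg_ind hW φ F x]
    rfl
  simp_rw [h2]
  rw [integral_proj φ (measurable_wg hW F)]
  exact (tIndW_eq_integral_wg F W).symm

/-- Combine two embeddings with disjoint ranges. -/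
def joinEmb {m m' n : ℕ} (φ : Fin m ↪ Fin n) (ψ : Fin m' ↪ Fin n)
    (hd : ∀ u v, φ u ≠ ψ v) : Fin (m + m') ↪ Fin n where
  toFun i := Sum.elim φ ψ (finSumFinEquiv.symm i)
  inj' := by
    intro a b h
    have h' : Sum.elim (⇑φ) (⇑ψ) (finSumFinEquiv.symm a)
        = Sum.elim (⇑φ) (⇑ψ) (finSumFinEquiv.symm b) := h
    apply finSumFinEquiv.symm.injective
    rcases ha : finSumFinEquiv.symm a with u | u <;> rcases hb : finSumFinEquiv.symm b with v | v <;>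
      rw [ha, hb] at h' <;> simp only [Sum.elim_inl, Sum.elim_inr] at h'
    · rw [φ.injective h']
    · exact absurd h' (hd u v)
    · exact absurd h'.symm (hd v u)
    · rw [ψ.injective h']

lemma joinEmb_castAdd {m m' n : ℕ} (φ : Fin m ↪ Fin n) (ψ : Fin m' ↪ Fin n)
    (hd : ∀ u v, φ u ≠ ψ v) (u : Fin m) :
    joinEmb φ ψ hd (Fin.castAdd m' u) = φ u := by
  show Sum.elim φ ψ (finSumFinEquiv.symm (Fin.castAdd m' u)) = φ u
  simp

lemma joinEmb_natAdd {m m' n : ℕ} (φ : Fin m ↪ Fin n) (ψ : Fin m' ↪ Fin n)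
    (hd : ∀ u v, φ u ≠ ψ v) (v : Fin m') :
    joinEmb φ ψ hd (Fin.natAdd m v) = ψ v := by
  show Sum.elim φ ψ (finSumFinEquiv.symm (Fin.natAdd m v)) = ψ v
  simp

lemma integral_wg_mul {W : ℝ → ℝ → ℝ} (hW : IsGraphon W) {m m' n : ℕ}
    (φ : Fin m ↪ Fin n) (ψ : Fin m' ↪ Fin n) (hd : ∀ u v, φ u ≠ ψ v)
    (F : SimpleGraph (Fin m)) (F' : SimpleGraph (Fin m')) :
    ∫ x, wg W F (fun u => x (φ u)) * wg W F' (fun v => x (ψ v)) ∂(cubeMeasure n)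
      = tIndW F W * tIndW F' W := by
  classical
  set χ := joinEmb φ ψ hd with hχ
  have hpt : ∀ x : Fin n → ℝ,
      wg W F (fun u => x (φ u)) * wg W F' (fun v => x (ψ v))
      = (fun y : Fin (m + m') → ℝ =>
          wg W F (fun u => y (Fin.castAdd m' u)) * wg W F' (fun v => y (Fin.natAdd m v)))
        (fun w => x (χ w)) := by
    intro x
    simp only []
    congr 1
    · congr 1; funext u; rw [joinEmb_castAdd]
    · congr 1; funext v; rw [joinEmb_natAdd]
  simp_rw [hpt]
  have hmeasL : Measurable (fun y : Fin (m + m') → ℝ => wg W F (fun u => y (Fin.castAdd m' u))) :=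
    (measurable_wg hW F).comp (measurable_pi_lambda _ (fun u => measurable_pi_apply _))
  have hmeasR : Measurable (fun y : Fin (m + m') → ℝ => wg W F' (fun v => y (Fin.natAdd m v))) :=
    (measurable_wg hW F').comp (measurable_pi_lambda _ (fun v => measurable_pi_apply _))
  rw [integral_proj χ (g := fun y : Fin (m + m') → ℝ =>
    wg W F (fun u => y (Fin.castAdd m' u)) * wg W F' (fun v => y (Fin.natAdd m v))) (hmeasL.mul hmeasR)]
  rw [integral_split (measurable_wg hW F) (measurable_wg hW F')]
  rw [← tIndW_eq_integral_wg, ← tIndW_eq_integral_wg]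

lemma sum_tIndW_ind_two {W : ℝ → ℝ → ℝ} (hW : IsGraphon W) {m m' n : ℕ}
    (φ : Fin m ↪ Fin n) (ψ : Fin m' ↪ Fin n) (hd : ∀ u v, φ u ≠ ψ v)
    (F : SimpleGraph (Fin m)) (F' : SimpleGraph (Fin m')) :
    ∑ H ∈ Finset.univ.filter
        (fun H : SimpleGraph (Fin n) =>
          (∀ u v, H.Adj (φ u) (φ v) ↔ F.Adj u v) ∧ (∀ u v, H.Adj (ψ u) (ψ v) ↔ F'.Adj u v)),
      tIndW H W = tIndW F W * tIndW F' W := by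
  classical
  have h1 : ∑ H ∈ Finset.univ.filter
        (fun H : SimpleGraph (Fin n) =>
          (∀ u v, H.Adj (φ u) (φ v) ↔ F.Adj u v) ∧ (∀ u v, H.Adj (ψ u) (ψ v) ↔ F'.Adj u v)),
      tIndW H W
      = ∫ x, (∑ H ∈ Finset.univ.filter
        (fun H : SimpleGraph (Fin n) =>
          (∀ u v, H.Adj (φ u) (φ v) ↔ F.Adj u v) ∧ (∀ u v, H.Adj (ψ u) (ψ v) ↔ F'.Adj u v)),
          wg W H x) ∂(cubeMeasure n) := by
    rw [integral_finset_sum _ (fun H _ => integrable_wg hW H)]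
    exact Finset.sum_congr rfl (fun H _ => tIndW_eq_integral_wg H W)
  rw [h1]
  have h2 : ∀ x, (∑ H ∈ Finset.univ.filter
        (fun H : SimpleGraph (Fin n) =>
          (∀ u v, H.Adj (φ u) (φ v) ↔ F.Adj u v) ∧ (∀ u v, H.Adj (ψ u) (ψ v) ↔ F'.Adj u v)),
          wg W H x) = wg W F (fun u => x (φ u)) * wg W F' (fun v => x (ψ v)) := by
    intro x
    rw [sum_wg_ind_two hW φ ψ hd F F' x]
    rfl
  simp_rw [h2]
  exact integral_wg_mul hW φ ψ hd F F'

lemma card_embeddings (m n : ℕ) :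
    Fintype.card (Fin m ↪ Fin n) = n.descFactorial m := by
  rw [Fintype.card_embedding_eq]
  simp

/-- First moment: the expectation of `tIndG F ·` under the `tIndW · W` weights. -/
lemma expectation_tIndG {W : ℝ → ℝ → ℝ} (hW : IsGraphon W) {m n : ℕ} (hmn : m ≤ n)
    (F : SimpleGraph (Fin m)) :
    ∑ H : SimpleGraph (Fin n), tIndW H W * tIndG F H = tIndW F W := by
  classical
  set D : ℝ := (n.descFactorial m : ℝ) with hD
  have hDpos : 0 < D := by
    rw [hD]
    have : 0 < n.descFactorial m := by
      rcases Nat.eq_zero_or_pos (n.descFactorial m) with h | h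
      · exact absurd (Nat.descFactorial_eq_zero_iff_lt.mp h) (not_lt.mpr hmn)
      · exact h
    exact_mod_cast this
  have h1 : ∀ H : SimpleGraph (Fin n),
      tIndW H W * tIndG F H
      = (∑ φ : Fin m ↪ Fin n,
          if (∀ u v, H.Adj (φ u) (φ v) ↔ F.Adj u v) then tIndW H W else 0) / D := by
    intro H
    rw [tIndG, ← Finset.sum_filter, Finset.sum_const, nsmul_eq_mul, ← hD]
    field_simp
  simp_rw [h1]
  rw [← Finset.sum_div]
  rw [Finset.sum_comm]
  have h2 : ∀ φ : Fin m ↪ Fin n,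
      (∑ H : SimpleGraph (Fin n),
        if (∀ u v, H.Adj (φ u) (φ v) ↔ F.Adj u v) then tIndW H W else 0) = tIndW F W := by
    intro φ
    rw [← Finset.sum_filter]
    exact sum_tIndW_ind hW φ F
  simp_rw [h2]
  rw [Finset.sum_const, nsmul_eq_mul]
  rw [show ((Finset.univ : Finset (Fin m ↪ Fin n)).card : ℝ) = D by
    rw [hD, Finset.card_univ, card_embeddings]]
  field_simp

end GP

namespace GP

lemma descFactorial_eq {m n : ℕ} (hm : 1 ≤ m) (hn : 1 ≤ n) :
    n.descFactorial m = n * (n - 1).descFactorial (m - 1) := by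
  rcases m with _ | m'
  · omega
  · rcases n with _ | n'
    · omega
    · simpa using Nat.succ_descFactorial_succ n' m'

lemma sum_tIndW_subset_le_one {W : ℝ → ℝ → ℝ} (hW : IsGraphon W) {n : ℕ}
    (s : Finset (SimpleGraph (Fin n))) : ∑ H ∈ s, tIndW H W ≤ 1 := by
  calc ∑ H ∈ s, tIndW H W ≤ ∑ H : SimpleGraph (Fin n), tIndW H W :=
        Finset.sum_le_sum_of_subset_of_nonneg (Finset.subset_univ s)
          (fun H _ _ => tIndW_nonneg hW H)
    _ = 1 := sum_tIndW_all hW n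

lemma card_fixed_val {m n : ℕ} (v : Fin m) (a : Fin n) :
    (Finset.univ.filter (fun ψ : Fin m ↪ Fin n => ψ v = a)).card
      ≤ (n - 1).descFactorial (m - 1) := by
  classical
  set s := Finset.univ.filter (fun ψ : Fin m ↪ Fin n => ψ v = a) with hs
  have hcard : Fintype.card {w : Fin m // w ≠ v} = m - 1 := by
    rw [Fintype.card_subtype_compl (p := fun w => w = v), Fintype.card_subtype_eq]
    simp
  have hcard' : Fintype.card {b : Fin n // b ≠ a} = n - 1 := by
    rw [Fintype.card_subtype_compl (p := fun b => b = a), Fintype.card_subtype_eq]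
    simp
  have htgt : Fintype.card ({w : Fin m // w ≠ v} ↪ {b : Fin n // b ≠ a})
      = (n - 1).descFactorial (m - 1) := by
    rw [Fintype.card_embedding_eq, hcard, hcard']
  rw [← htgt, ← Fintype.card_coe s]
  have hmem : ∀ ψ : {ψ : Fin m ↪ Fin n // ψ ∈ s}, ψ.1 v = a := by
    intro ψ
    have := ψ.2
    simp only [hs, Finset.mem_filter, Finset.mem_univ, true_and] at this
    exact this
  set f : {ψ : Fin m ↪ Fin n // ψ ∈ s} → ({w : Fin m // w ≠ v} ↪ {b : Fin n // b ≠ a}) :=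
    fun ψ => ⟨fun w => ⟨ψ.1 w.1, fun he => w.2 (ψ.1.injective (he.trans (hmem ψ).symm))⟩,
      by
        intro w w' hww
        have hval : ψ.1 w.1 = ψ.1 w'.1 := congrArg Subtype.val hww
        exact Subtype.ext (ψ.1.injective hval)⟩ with hf
  apply Fintype.card_le_of_injective f
  intro ψ ψ' hψψ
  apply Subtype.ext
  apply DFunLike.ext
  intro w
  by_cases hw : w = v
  · rw [hw, hmem ψ, hmem ψ']
  · have h1 : (f ψ) ⟨w, hw⟩ = (f ψ') ⟨w, hw⟩ := DFunLike.congr_fun hψψ ⟨w, hw⟩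
    exact congrArg Subtype.val h1

lemma card_overlap {m n : ℕ} (φ : Fin m ↪ Fin n) :
    (Finset.univ.filter (fun ψ : Fin m ↪ Fin n => ¬ ∀ u v, φ u ≠ ψ v)).card
      ≤ m * m * (n - 1).descFactorial (m - 1) := by
  classical
  have hsub : Finset.univ.filter (fun ψ : Fin m ↪ Fin n => ¬ ∀ u v, φ u ≠ ψ v)
      ⊆ (Finset.univ : Finset (Fin m × Fin m)).biUnion
          (fun p => Finset.univ.filter (fun ψ : Fin m ↪ Fin n => ψ p.2 = φ p.1)) := by
    intro ψ hψ
    simp only [Finset.mem_filter, Finset.mem_univ, true_and] at hψ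
    push_neg at hψ
    obtain ⟨u, v, huv⟩ := hψ
    apply Finset.mem_biUnion.mpr
    exact ⟨(u, v), Finset.mem_univ _, by simp [huv.symm]⟩
  calc (Finset.univ.filter (fun ψ : Fin m ↪ Fin n => ¬ ∀ u v, φ u ≠ ψ v)).card
      ≤ ((Finset.univ : Finset (Fin m × Fin m)).biUnion
          (fun p => Finset.univ.filter (fun ψ : Fin m ↪ Fin n => ψ p.2 = φ p.1))).card :=
        Finset.card_le_card hsub
    _ ≤ ∑ p : Fin m × Fin m,
          (Finset.univ.filter (fun ψ : Fin m ↪ Fin n => ψ p.2 = φ p.1)).card :=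
        Finset.card_biUnion_le
    _ ≤ ∑ _p : Fin m × Fin m, (n - 1).descFactorial (m - 1) :=
        Finset.sum_le_sum (fun p _ => card_fixed_val p.2 (φ p.1))
    _ = m * m * (n - 1).descFactorial (m - 1) := by
        rw [Finset.sum_const, Finset.card_univ]
        simp [Fintype.card_prod, mul_assoc]

/-- Second moment bound. -/
lemma expectation_tIndG_sq {W : ℝ → ℝ → ℝ} (hW : IsGraphon W) {m n : ℕ}
    (hmn : m ≤ n) (hm : 1 ≤ m) (F : SimpleGraph (Fin m)) :
    ∑ H : SimpleGraph (Fin n), tIndW H W * (tIndG F H)^2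
      ≤ (tIndW F W)^2 + (m * m : ℝ) / n := by
  classical
  set E := Fin m ↪ Fin n with hE
  set D : ℝ := (n.descFactorial m : ℝ) with hD
  have hn1 : 1 ≤ n := le_trans hm hmn
  have hDposN : 0 < n.descFactorial m := by
    rcases Nat.eq_zero_or_pos (n.descFactorial m) with h | h
    · exact absurd (Nat.descFactorial_eq_zero_iff_lt.mp h) (not_lt.mpr hmn)
    · exact h
  have hDpos : 0 < D := by rw [hD]; exact_mod_cast hDposN
  set t : ℝ := tIndW F W with ht
  set cond : E → SimpleGraph (Fin n) → Prop :=
    fun φ H => ∀ u v, H.Adj (φ u) (φ v) ↔ F.Adj u v with hcond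
  have h1 : ∀ H : SimpleGraph (Fin n),
      tIndW H W * (tIndG F H)^2
      = (∑ pq : E × E,
          if cond pq.1 H ∧ cond pq.2 H then tIndW H W else 0) / D^2 := by
    intro H
    have hG : tIndG F H = (∑ φ : E, if cond φ H then (1:ℝ) else 0) / D := by
      rw [tIndG, Finset.sum_boole]
    have hSS : (∑ φ : E, if cond φ H then (1:ℝ) else 0)
          * (∑ ψ : E, if cond ψ H then (1:ℝ) else 0)
        = ∑ pq : E × E, if cond pq.1 H ∧ cond pq.2 H then (1:ℝ) else 0 := by
      rw [Finset.sum_mul_sum]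
      rw [← Finset.sum_product', Finset.univ_product_univ]
      apply Finset.sum_congr rfl
      intro pq _
      by_cases hh1 : cond pq.1 H <;> by_cases hh2 : cond pq.2 H
      · rw [if_pos hh1, if_pos hh2, if_pos ⟨hh1, hh2⟩, one_mul]
      · rw [if_pos hh1, if_neg hh2, if_neg (fun h => hh2 h.2), one_mul]
      · rw [if_neg hh1, if_pos hh2, if_neg (fun h => hh1 h.1), zero_mul]
      · rw [if_neg hh1, if_neg hh2, if_neg (fun h => hh1 h.1), mul_zero]
    have hsum : ∑ pq : E × E, (if cond pq.1 H ∧ cond pq.2 H then tIndW H W else 0)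
        = tIndW H W * ∑ pq : E × E, (if cond pq.1 H ∧ cond pq.2 H then (1:ℝ) else 0) := by
      rw [Finset.mul_sum]
      apply Finset.sum_congr rfl
      intro pq _
      by_cases h : cond pq.1 H ∧ cond pq.2 H
      · rw [if_pos h, if_pos h, mul_one]
      · rw [if_neg h, if_neg h, mul_zero]
    rw [hG, hsum, ← hSS, div_pow, sq]
    field_simp
    try ring
  simp_rw [h1]
  rw [← Finset.sum_div]
  rw [Finset.sum_comm]
  -- now bound (∑ pq, ∑ H, ... ) / D^2
  have hinner : ∀ pq : E × E,
      (∑ H : SimpleGraph (Fin n), if cond pq.1 H ∧ cond pq.2 H then tIndW H W else 0)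
      = ∑ H ∈ Finset.univ.filter (fun H => cond pq.1 H ∧ cond pq.2 H), tIndW H W := by
    intro pq
    rw [Finset.sum_filter]
  have hSle : ∀ pq : E × E,
      (∑ H ∈ Finset.univ.filter (fun H => cond pq.1 H ∧ cond pq.2 H), tIndW H W)
      ≤ if (∀ u v, pq.1 u ≠ pq.2 v) then t^2 else 1 := by
    intro pq
    by_cases hg : ∀ u v, pq.1 u ≠ pq.2 v
    · rw [if_pos hg, sq, ht]
      exact le_of_eq (sum_tIndW_ind_two hW pq.1 pq.2 hg F F)
    · rw [if_neg hg]
      exact sum_tIndW_subset_le_one hW _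
  set dF1 : ℝ := ((n - 1).descFactorial (m - 1) : ℝ) with hdF1
  have hdF1pos : 0 < dF1 := by
    rw [hdF1]
    have : 0 < (n - 1).descFactorial (m - 1) := by
      rcases Nat.eq_zero_or_pos ((n - 1).descFactorial (m - 1)) with h | h
      · have := Nat.descFactorial_eq_zero_iff_lt.mp h
        omega
      · exact h
    exact_mod_cast this
  have hDeq : D = n * dF1 := by
    rw [hD, hdF1, descFactorial_eq hm hn1]
    push_cast
    ring
  have hbadN : (Finset.univ.filter (fun pq : E × E => ¬ ∀ u v, pq.1 u ≠ pq.2 v)).card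
      ≤ n.descFactorial m * (m * m * (n - 1).descFactorial (m - 1)) := by
    have hsub : Finset.univ.filter (fun pq : E × E => ¬ ∀ u v, pq.1 u ≠ pq.2 v)
        ⊆ (Finset.univ : Finset E).biUnion (fun φ =>
            (Finset.univ.filter (fun ψ : E => ¬ ∀ u v, φ u ≠ ψ v)).image (fun ψ => (φ, ψ))) := by
      intro pq hpq
      simp only [Finset.mem_filter, Finset.mem_univ, true_and] at hpq
      apply Finset.mem_biUnion.mpr
      refine ⟨pq.1, Finset.mem_univ _, ?_⟩
      apply Finset.mem_image.mpr
      refine ⟨pq.2, ?_, rfl⟩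
      simp only [Finset.mem_filter, Finset.mem_univ, true_and]
      exact hpq
    calc (Finset.univ.filter (fun pq : E × E => ¬ ∀ u v, pq.1 u ≠ pq.2 v)).card
        ≤ ((Finset.univ : Finset E).biUnion (fun φ =>
            (Finset.univ.filter (fun ψ : E => ¬ ∀ u v, φ u ≠ ψ v)).image
              (fun ψ => (φ, ψ)))).card := Finset.card_le_card hsub
      _ ≤ ∑ φ : E, ((Finset.univ.filter (fun ψ : E => ¬ ∀ u v, φ u ≠ ψ v)).image
              (fun ψ => (φ, ψ))).card := Finset.card_biUnion_le
      _ ≤ ∑ φ : E, (Finset.univ.filter (fun ψ : E => ¬ ∀ u v, φ u ≠ ψ v)).card :=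
            Finset.sum_le_sum (fun φ _ => Finset.card_image_le)
      _ ≤ ∑ _φ : E, m * m * (n - 1).descFactorial (m - 1) :=
            Finset.sum_le_sum (fun φ _ => card_overlap φ)
      _ = n.descFactorial m * (m * m * (n - 1).descFactorial (m - 1)) := by
            rw [Finset.sum_const, Finset.card_univ, card_embeddings, smul_eq_mul]
  have hgoodcard : ((Finset.univ.filter (fun pq : E × E => ∀ u v, pq.1 u ≠ pq.2 v)).card : ℝ)
      ≤ D^2 := by
    have h1 : (Finset.univ.filter (fun pq : E × E => ∀ u v, pq.1 u ≠ pq.2 v)).card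
        ≤ Fintype.card (E × E) := by
      rw [← Finset.card_univ]
      exact Finset.card_le_card (Finset.subset_univ _)
    have h2 : (Fintype.card (E × E) : ℝ) = D^2 := by
      have hce : Fintype.card E = n.descFactorial m := card_embeddings m n
      rw [Fintype.card_prod, hce, hD]
      push_cast
      ring
    calc ((Finset.univ.filter (fun pq : E × E => ∀ u v, pq.1 u ≠ pq.2 v)).card : ℝ)
        ≤ (Fintype.card (E × E) : ℝ) := by exact_mod_cast h1
      _ = D^2 := h2
  have htsq : (0:ℝ) ≤ t^2 := sq_nonneg t
  set badR : ℝ := ((Finset.univ.filter (fun pq : E × E => ¬ ∀ u v, pq.1 u ≠ pq.2 v)).card : ℝ)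
    with hbadR
  have hmain : (∑ pq : E × E,
      ∑ H : SimpleGraph (Fin n), if cond pq.1 H ∧ cond pq.2 H then tIndW H W else 0)
      ≤ D^2 * t^2 + badR := by
    calc (∑ pq : E × E,
        ∑ H : SimpleGraph (Fin n), if cond pq.1 H ∧ cond pq.2 H then tIndW H W else 0)
        = ∑ pq : E × E,
            ∑ H ∈ Finset.univ.filter (fun H => cond pq.1 H ∧ cond pq.2 H), tIndW H W := by
          exact Finset.sum_congr rfl (fun pq _ => hinner pq)
      _ ≤ ∑ pq : E × E, (if (∀ u v, pq.1 u ≠ pq.2 v) then t^2 else 1) :=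
          Finset.sum_le_sum (fun pq _ => hSle pq)
      _ = ((Finset.univ.filter (fun pq : E × E => ∀ u v, pq.1 u ≠ pq.2 v)).card : ℝ) * t^2
            + badR := by
          rw [Finset.sum_ite, Finset.sum_const, Finset.sum_const, hbadR]
          simp [nsmul_eq_mul]
      _ ≤ D^2 * t^2 + badR := by
          have := mul_le_mul_of_nonneg_right hgoodcard htsq
          linarith
  have hbadRle : badR / D^2 ≤ (m * m : ℝ) / n := by
    have hbadRD : badR ≤ D * (m * m * dF1) := by
      rw [hbadR, hD, hdF1]
      exact_mod_cast hbadN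
    have hnpos : (0:ℝ) < n := by exact_mod_cast hn1
    have hD2pos : (0:ℝ) < D^2 := by positivity
    calc badR / D^2 ≤ (D * (m * m * dF1)) / D^2 := (div_le_div_iff_of_pos_right hD2pos).mpr hbadRD
      _ = (m * m : ℝ) / n := by
          rw [hDeq]
          field_simp
  calc (∑ pq : E × E,
      ∑ H : SimpleGraph (Fin n), if cond pq.1 H ∧ cond pq.2 H then tIndW H W else 0) / D^2
      ≤ (D^2 * t^2 + badR) / D^2 := by
        have hD2pos : (0:ℝ) < D^2 := by positivity
        exact (div_le_div_iff_of_pos_right hD2pos).mpr hmain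
    _ = t^2 + badR / D^2 := by
        field_simp
    _ ≤ t^2 + (m * m : ℝ) / n := by linarith [hbadRle]

end GP

namespace GP

lemma tIndW_zero {W : ℝ → ℝ → ℝ} (F : SimpleGraph (Fin 0)) : tIndW F W = 1 := by
  rw [tIndW_eq_integral_wg]
  have hEmpty : IsEmpty (PairIdx 0) := ⟨fun q => q.1.1.elim0⟩
  have hwg : ∀ x, wg W F x = 1 := by
    intro x
    rw [wg]
    rw [@Finset.univ_eq_empty _ _ hEmpty, Finset.prod_empty]
  simp_rw [hwg]
  simp

lemma tIndG_zero {n : ℕ} (F : SimpleGraph (Fin 0)) (H : SimpleGraph (Fin n)) :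
    tIndG F H = 1 := by
  rw [tIndG]
  have hfil : (Finset.univ.filter fun φ : Fin 0 ↪ Fin n =>
      ∀ u v, H.Adj (φ u) (φ v) ↔ F.Adj u v) = Finset.univ := by
    ext φ
    simp only [Finset.mem_filter, Finset.mem_univ, true_and, iff_true]
    intro u
    exact u.elim0
  rw [hfil, Finset.card_univ, card_embeddings]
  simp

/-- Variance bound. -/
lemma var_bound {W : ℝ → ℝ → ℝ} (hW : IsGraphon W) {m n : ℕ} (hmn : m ≤ n) (hn : 1 ≤ n)
    (F : SimpleGraph (Fin m)) :
    ∑ H : SimpleGraph (Fin n), tIndW H W * (tIndG F H - tIndW F W)^2 ≤ (m * m : ℝ) / n := by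
  classical
  by_cases hm : 1 ≤ m
  · set c : ℝ := tIndW F W with hc
    have hexp : ∀ H : SimpleGraph (Fin n),
        tIndW H W * (tIndG F H - c)^2
        = tIndW H W * (tIndG F H)^2 - 2*c*(tIndW H W * tIndG F H) + c^2 * tIndW H W := by
      intro H; ring
    simp_rw [hexp]
    rw [Finset.sum_add_distrib, Finset.sum_sub_distrib, ← Finset.mul_sum, ← Finset.mul_sum]
    rw [expectation_tIndG hW hmn F, ← hc, sum_tIndW_all hW n]
    have h2 := expectation_tIndG_sq hW hmn hm F
    rw [← hc] at h2
    have hnpos : (0:ℝ) < n := by exact_mod_cast hn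
    nlinarith [h2]
  · have hm0 : m = 0 := by omega
    subst hm0
    have : ∀ H : SimpleGraph (Fin n), tIndW H W * (tIndG F H - tIndW F W)^2 = 0 := by
      intro H
      rw [tIndG_zero, tIndW_zero]
      ring
    simp_rw [this]
    rw [Finset.sum_const_zero]
    positivity

/-- If all graphs outside `P` have zero density, the `P`-graphs carry all the weight. -/
lemma sum_P_eq_one {W : ℝ → ℝ → ℝ} (hW : IsGraphon W) (P : ∀ n : ℕ, Set (SimpleGraph (Fin n)))
    (h0 : ∀ (m : ℕ) (F : SimpleGraph (Fin m)), F ∉ P m → tIndW F W = 0) (n : ℕ) :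
    ∑ H ∈ Finset.univ.filter (fun H : SimpleGraph (Fin n) => H ∈ P n), tIndW H W = 1 := by
  classical
  have hsplit := Finset.sum_filter_add_sum_filter_not Finset.univ
    (fun H : SimpleGraph (Fin n) => H ∈ P n) (fun H => tIndW H W)
  have hzero : ∑ H ∈ Finset.univ.filter (fun H : SimpleGraph (Fin n) => ¬ H ∈ P n),
      tIndW H W = 0 := by
    apply Finset.sum_eq_zero
    intro H hH
    simp only [Finset.mem_filter, Finset.mem_univ, true_and] at hH
    exact h0 n H hH
  have := sum_tIndW_all hW n
  rw [← hsplit, hzero, add_zero] at this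
  exact this

/-- the family of all graphs on at most `k` vertices -/
def Fam (k : ℕ) : Finset (Σ m : ℕ, SimpleGraph (Fin m)) :=
  (Finset.range (k + 1)).sigma (fun m => (Finset.univ : Finset (SimpleGraph (Fin m))))

/-- Chebyshev: the weight of graphs with a bad `F`-density is small. -/
lemma cheby {W : ℝ → ℝ → ℝ} (hW : IsGraphon W) {m n : ℕ} (hmn : m ≤ n) (hn : 1 ≤ n)
    (F : SimpleGraph (Fin m)) {ε : ℝ} (hε : 0 < ε) :
    ∑ H ∈ Finset.univ.filter
        (fun H : SimpleGraph (Fin n) => ε < |tIndG F H - tIndW F W|), tIndW H W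
      ≤ (m * m : ℝ) / (n * ε^2) := by
  classical
  set s := Finset.univ.filter
      (fun H : SimpleGraph (Fin n) => ε < |tIndG F H - tIndW F W|) with hs
  have key : ε^2 * ∑ H ∈ s, tIndW H W ≤ (m * m : ℝ) / n := by
    rw [Finset.mul_sum]
    calc ∑ H ∈ s, ε^2 * tIndW H W
        ≤ ∑ H ∈ s, tIndW H W * (tIndG F H - tIndW F W)^2 := by
          apply Finset.sum_le_sum
          intro H hH
          rw [hs] at hH
          simp only [Finset.mem_filter, Finset.mem_univ, true_and] at hH
          have h1 : ε^2 ≤ (tIndG F H - tIndW F W)^2 := by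
            have := abs_nonneg (tIndG F H - tIndW F W)
            nlinarith [sq_abs (tIndG F H - tIndW F W)]
          have h2 := tIndW_nonneg hW H
          nlinarith
      _ ≤ ∑ H : SimpleGraph (Fin n), tIndW H W * (tIndG F H - tIndW F W)^2 := by
          apply Finset.sum_le_sum_of_subset_of_nonneg (Finset.subset_univ _)
          intro H _ _
          have := tIndW_nonneg hW H
          positivity
      _ ≤ (m * m : ℝ) / n := var_bound hW hmn hn F
  have hε2 : (0:ℝ) < ε^2 := by positivity
  rw [show (m * m : ℝ) / (n * ε^2) = ((m * m : ℝ) / n) / ε^2 by rw [div_div]]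
  rw [le_div_iff₀ hε2, mul_comm]
  exact key

end GP

namespace GP

lemma sum_biUnion_le_sum {ι α : Type*} [DecidableEq α] (s : Finset ι) (B : ι → Finset α)
    (f : α → ℝ) (hf : ∀ a, 0 ≤ f a) :
    ∑ x ∈ s.biUnion B, f x ≤ ∑ i ∈ s, ∑ x ∈ B i, f x := by
  classical
  induction s using Finset.induction with
  | empty => simp
  | @insert a s ha ih =>
      rw [Finset.biUnion_insert, Finset.sum_insert ha]
      have h1 : ∑ x ∈ B a ∪ s.biUnion B, f x
          ≤ ∑ x ∈ B a, f x + ∑ x ∈ s.biUnion B, f x := by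
        have h2 : ∑ x ∈ B a ∪ s.biUnion B, f x + ∑ x ∈ B a ∩ s.biUnion B, f x
            = ∑ x ∈ B a, f x + ∑ x ∈ s.biUnion B, f x := Finset.sum_union_inter
        have h3 : 0 ≤ ∑ x ∈ B a ∩ s.biUnion B, f x :=
          Finset.sum_nonneg (fun x _ => hf x)
        linarith
      exact h1.trans (by linarith [ih])

lemma exists_good {W : ℝ → ℝ → ℝ} (hW : IsGraphon W)
    (P : ∀ n : ℕ, Set (SimpleGraph (Fin n)))
    (h0 : ∀ (m : ℕ) (F : SimpleGraph (Fin m)), F ∉ P m → tIndW F W = 0) (k : ℕ) :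
    ∃ N : ℕ, k + 1 ≤ N ∧ ∀ n, N ≤ n →
      ∃ H : SimpleGraph (Fin n), H ∈ P n ∧
        ∀ p ∈ Fam k, |tIndG p.2 H - tIndW p.2 W| ≤ 1 / (k + 1 : ℝ) := by
  classical
  set C : ℕ := (Fam k).card * ((k * k) * (k + 1)^2) with hC
  refine ⟨max (k + 1) (C + 1), le_max_left _ _, ?_⟩
  intro n hn
  have hnk : k + 1 ≤ n := le_trans (le_max_left _ _) hn
  have hnC : C + 1 ≤ n := le_trans (le_max_right _ _) hn
  have hn1 : 1 ≤ n := by omega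
  set ε : ℝ := 1 / (k + 1 : ℝ) with hε
  have hεpos : 0 < ε := by rw [hε]; positivity
  set good : SimpleGraph (Fin n) → Prop :=
    fun H => ∀ p ∈ Fam k, |tIndG p.2 H - tIndW p.2 W| ≤ ε with hgood
  set SP := Finset.univ.filter (fun H : SimpleGraph (Fin n) => H ∈ P n) with hSP
  have hsplit := Finset.sum_filter_add_sum_filter_not SP good (fun H => tIndW H W)
  have hPsum : ∑ H ∈ SP, tIndW H W = 1 := sum_P_eq_one hW P h0 n
  set Bad : (Σ m : ℕ, SimpleGraph (Fin m)) → Finset (SimpleGraph (Fin n)) :=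
    fun p => Finset.univ.filter
      (fun H : SimpleGraph (Fin n) => ε < |tIndG p.2 H - tIndW p.2 W|) with hBad
  have hsubset : SP.filter (fun H => ¬ good H) ⊆ (Fam k).biUnion Bad := by
    intro H hH
    simp only [Finset.mem_filter] at hH
    have h' : ¬ ∀ p ∈ Fam k, |tIndG p.2 H - tIndW p.2 W| ≤ ε := hH.2
    push_neg at h'
    obtain ⟨p, hp, hplt⟩ := h'
    apply Finset.mem_biUnion.mpr
    refine ⟨p, hp, ?_⟩
    rw [hBad]
    simp only [Finset.mem_filter, Finset.mem_univ, true_and]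
    exact hplt
  have hbadle : ∑ H ∈ SP.filter (fun H => ¬ good H), tIndW H W ≤ (C : ℝ) / n := by
    calc ∑ H ∈ SP.filter (fun H => ¬ good H), tIndW H W
        ≤ ∑ H ∈ (Fam k).biUnion Bad, tIndW H W :=
          Finset.sum_le_sum_of_subset_of_nonneg hsubset (fun H _ _ => tIndW_nonneg hW H)
      _ ≤ ∑ p ∈ Fam k, ∑ H ∈ Bad p, tIndW H W :=
          sum_biUnion_le_sum _ _ _ (fun H => tIndW_nonneg hW H)
      _ ≤ ∑ p ∈ Fam k, ((k * k : ℝ) * (k+1)^2) / n := by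
          apply Finset.sum_le_sum
          intro p hp
          have hpk : p.1 ≤ k := by
            rw [Fam] at hp
            simp only [Finset.mem_sigma, Finset.mem_range] at hp
            omega
          have hpn : p.1 ≤ n := by omega
          calc ∑ H ∈ Bad p, tIndW H W
              ≤ ((p.1 * p.1 : ℝ)) / (n * ε^2) := cheby hW hpn hn1 p.2 hεpos
            _ ≤ ((k * k : ℝ) * (k+1)^2) / n := by
                rw [hε]
                have hk1 : ((k:ℝ) + 1) > 0 := by positivity
                rw [show (1 / ((k:ℝ) + 1))^2 = 1 / ((k:ℝ)+1)^2 by rw [div_pow, one_pow]]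
                rw [show (n : ℝ) * (1 / ((k:ℝ)+1)^2) = (n : ℝ) / ((k:ℝ)+1)^2 by ring]
                rw [div_div_eq_mul_div, div_le_div_iff₀ (by positivity) (by positivity)]
                have hp1 : (p.1 : ℝ) ≤ k := by exact_mod_cast hpk
                have hp0 : (0:ℝ) ≤ p.1 := by positivity
                have hncast : (1:ℝ) ≤ (n:ℝ) := by exact_mod_cast hn1
                have hpp : (p.1:ℝ) * (p.1:ℝ) ≤ (k:ℝ) * k :=
                  mul_le_mul hp1 hp1 hp0 (by positivity)
                nlinarith [mul_nonneg (mul_nonneg (sub_nonneg.mpr hpp)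
                  (sq_nonneg ((k:ℝ)+1))) (le_trans zero_le_one hncast)]
      _ = ((Fam k).card : ℝ) * (((k * k : ℝ) * (k+1)^2) / n) := by
          rw [Finset.sum_const, nsmul_eq_mul]
      _ = (C : ℝ) / n := by
          rw [hC]
          push_cast
          ring
  have hCn : (C : ℝ) / n < 1 := by
    rw [div_lt_one (by exact_mod_cast hn1 : (0:ℝ) < n)]
    exact_mod_cast hnC
  have hgoodsum : 0 < ∑ H ∈ SP.filter good, tIndW H W := by
    have := hsplit
    rw [hPsum] at this
    linarith
  have hne : (SP.filter good).Nonempty := Finset.nonempty_of_sum_ne_zero (ne_of_gt hgoodsum)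
  obtain ⟨H, hH⟩ := hne
  simp only [hSP, Finset.mem_filter, Finset.mem_univ, true_and] at hH
  exact ⟨H, hH.1, hH.2⟩

lemma exists_conv_seq {W : ℝ → ℝ → ℝ} (hW : IsGraphon W)
    (P : ∀ n : ℕ, Set (SimpleGraph (Fin n)))
    (h0 : ∀ (m : ℕ) (F : SimpleGraph (Fin m)), F ∉ P m → tIndW F W = 0) :
    ∃ G : ℕ → Σ n : ℕ, SimpleGraph (Fin n),
      (∀ k, (G k).2 ∈ P (G k).1) ∧ ConvergesTo G W := by
  classical
  choose N hN1 hN2 using fun k => exists_good hW P h0 k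
  choose H hH1 hH2 using fun k => hN2 k (N k) (le_refl _)
  refine ⟨fun k => ⟨N k, H k⟩, fun k => hH1 k, ?_, ?_⟩
  · apply tendsto_atTop_mono (fun k => (Nat.le_succ k).trans (hN1 k))
    exact tendsto_id
  · intro m F
    rw [tendsto_iff_norm_sub_tendsto_zero]
    have h1 : ∀ᶠ k : ℕ in atTop, ‖tIndG F (H k) - tIndW F W‖ ≤ 1 / ((k:ℝ) + 1) := by
      filter_upwards [Filter.eventually_ge_atTop m] with k hk
      have hmem : (⟨m, F⟩ : Σ m : ℕ, SimpleGraph (Fin m)) ∈ Fam k := by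
        rw [Fam]
        simp only [Finset.mem_sigma, Finset.mem_range, Finset.mem_univ, and_true]
        omega
      have := hH2 k ⟨m, F⟩ hmem
      simpa [Real.norm_eq_abs] using this
    exact squeeze_zero' (Filter.Eventually.of_forall (fun k => norm_nonneg _)) h1
      tendsto_one_div_add_atTop_nhds_zero_nat
end GP

namespace GP

/-- key recursion: adding an `M`-block multiplies the `P`-weight by `1 - t_ind(F₀,W)`. -/
lemma recursion {W : ℝ → ℝ → ℝ} (hW : IsGraphon W)
    (P : ∀ n : ℕ, Set (SimpleGraph (Fin n))) (hP : Hereditary P)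
    {M : ℕ} (F₀ : SimpleGraph (Fin M)) (hF₀ : F₀ ∉ P M) (r : ℕ) :
    ∑ H ∈ Finset.univ.filter (fun H : SimpleGraph (Fin (r + M)) => H ∈ P (r + M)), tIndW H W
      ≤ (∑ H ∈ Finset.univ.filter (fun H : SimpleGraph (Fin r) => H ∈ P r), tIndW H W)
        * (1 - tIndW F₀ W) := by
  classical
  set eC : Fin r ↪ Fin (r + M) :=
    ⟨Fin.castAdd M, fun a b h => by
      apply Fin.ext
      have := congrArg Fin.val h
      simpa using this⟩ with heC
  set eN : Fin M ↪ Fin (r + M) :=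
    ⟨Fin.natAdd r, fun a b h => by
      apply Fin.ext
      have := congrArg Fin.val h
      simpa using this⟩ with heN
  have hd : ∀ u v, eC u ≠ eN v := by
    intro u v h
    have := congrArg Fin.val h
    change ((Fin.castAdd M u : Fin (r + M)) : ℕ) = ((Fin.natAdd r v : Fin (r + M)) : ℕ) at this
    simp only [heC, heN, Function.Embedding.coeFn_mk, Fin.coe_castAdd, Fin.coe_natAdd] at this
    omega
  set R1 : SimpleGraph (Fin (r + M)) → SimpleGraph (Fin r) :=
    fun H => SimpleGraph.comap (Fin.castAdd M) H with hR1
  set R2 : SimpleGraph (Fin (r + M)) → SimpleGraph (Fin M) :=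
    fun H => SimpleGraph.comap (Fin.natAdd r) H with hR2
  have hsub : Finset.univ.filter (fun H : SimpleGraph (Fin (r + M)) => H ∈ P (r + M))
      ⊆ Finset.univ.filter (fun H => R1 H ∈ P r ∧ R2 H ≠ F₀) := by
    intro H hH
    simp only [Finset.mem_filter, Finset.mem_univ, true_and] at hH ⊢
    constructor
    · exact hP r (r + M) (R1 H) H hH ⟨eC, fun u v => Iff.rfl⟩
    · intro heq
      apply hF₀
      rw [← heq]
      exact hP M (r + M) (R2 H) H hH ⟨eN, fun u v => Iff.rfl⟩
  have step1 : ∑ H ∈ Finset.univ.filter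
        (fun H : SimpleGraph (Fin (r + M)) => H ∈ P (r + M)), tIndW H W
      ≤ ∑ H ∈ Finset.univ.filter (fun H => R1 H ∈ P r ∧ R2 H ≠ F₀), tIndW H W :=
    Finset.sum_le_sum_of_subset_of_nonneg hsub (fun H _ _ => tIndW_nonneg hW H)
  -- factorize the RHS
  set s := Finset.univ.filter
    (fun H : SimpleGraph (Fin (r + M)) => R1 H ∈ P r ∧ R2 H ≠ F₀) with hs
  set g : SimpleGraph (Fin (r + M)) → SimpleGraph (Fin r) × SimpleGraph (Fin M) :=
    fun H => (R1 H, R2 H) with hg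
  have hfib := Finset.sum_fiberwise_of_maps_to
    (s := s) (g := g) (t := (Finset.univ : Finset (SimpleGraph (Fin r) × SimpleGraph (Fin M))))
    (fun H _ => Finset.mem_univ _) (fun H => tIndW H W)
  set cset := Finset.univ.filter
    (fun y : SimpleGraph (Fin r) × SimpleGraph (Fin M) => y.1 ∈ P r ∧ y.2 ≠ F₀) with hcset
  have hzero : ∀ y ∈ (Finset.univ : Finset (SimpleGraph (Fin r) × SimpleGraph (Fin M))),
      y ∉ cset → ∑ H ∈ s.filter (fun H => g H = y), tIndW H W = 0 := by
    intro y _ hy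
    rw [hcset] at hy
    simp only [Finset.mem_filter, Finset.mem_univ, true_and] at hy
    apply Finset.sum_eq_zero
    intro H hH
    exfalso
    simp only [hs, hg, Finset.mem_filter, Finset.mem_univ, true_and] at hH
    obtain ⟨⟨hc1, hc2⟩, hgH⟩ := hH
    apply hy
    rw [← hgH]
    exact ⟨hc1, hc2⟩
  have hsum_cset : ∑ H ∈ s, tIndW H W
      = ∑ y ∈ cset, ∑ H ∈ s.filter (fun H => g H = y), tIndW H W := by
    rw [← hfib]
    exact (Finset.sum_subset (Finset.subset_univ cset) (fun y hy hyn => hzero y hy hyn)).symm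
  have hfiber_eval : ∀ y ∈ cset,
      ∑ H ∈ s.filter (fun H => g H = y), tIndW H W = tIndW y.1 W * tIndW y.2 W := by
    intro y hy
    rw [hcset] at hy
    simp only [Finset.mem_filter, Finset.mem_univ, true_and] at hy
    have hset : s.filter (fun H => g H = y)
        = Finset.univ.filter
          (fun H : SimpleGraph (Fin (r + M)) =>
            (∀ u v, H.Adj (eC u) (eC v) ↔ y.1.Adj u v)
              ∧ (∀ u v, H.Adj (eN u) (eN v) ↔ y.2.Adj u v)) := by
      ext H
      simp only [hs, hg, Finset.mem_filter, Finset.mem_univ, true_and]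
      constructor
      · rintro ⟨-, hgH⟩
        have h1 : R1 H = y.1 := by rw [← hgH]
        have h2 : R2 H = y.2 := by rw [← hgH]
        constructor
        · intro u v
          rw [← h1]
          rfl
        · intro u v
          rw [← h2]
          rfl
      · rintro ⟨h1, h2⟩
        have hR1y : R1 H = y.1 := by
          rw [hR1]
          ext u v
          exact h1 u v
        have hR2y : R2 H = y.2 := by
          rw [hR2]
          ext u v
          exact h2 u v
        refine ⟨⟨?_, ?_⟩, ?_⟩
        · rw [hR1y]; exact hy.1
        · rw [hR2y]; exact hy.2
        · show (R1 H, R2 H) = y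
          rw [hR1y, hR2y]
    rw [hset]
    exact sum_tIndW_ind_two hW eC eN hd y.1 y.2
  have hprod : ∑ y ∈ cset, tIndW y.1 W * tIndW y.2 W
      = (∑ H1 ∈ Finset.univ.filter (fun H1 : SimpleGraph (Fin r) => H1 ∈ P r), tIndW H1 W)
        * (∑ H2 ∈ Finset.univ.filter (fun H2 : SimpleGraph (Fin M) => H2 ≠ F₀), tIndW H2 W) := by
    have hps : cset = (Finset.univ.filter (fun H1 : SimpleGraph (Fin r) => H1 ∈ P r))
        ×ˢ (Finset.univ.filter (fun H2 : SimpleGraph (Fin M) => H2 ≠ F₀)) := by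
      ext y
      simp only [hcset, Finset.mem_filter, Finset.mem_univ, true_and, Finset.mem_product]
    rw [hps, Finset.sum_product]
    rw [Finset.sum_mul_sum]
  have hcompl : ∑ H2 ∈ Finset.univ.filter (fun H2 : SimpleGraph (Fin M) => H2 ≠ F₀), tIndW H2 W
      = 1 - tIndW F₀ W := by
    have hsplit := Finset.sum_filter_add_sum_filter_not Finset.univ
      (fun H2 : SimpleGraph (Fin M) => H2 ≠ F₀) (fun H2 => tIndW H2 W)
    have hsingle : Finset.univ.filter (fun H2 : SimpleGraph (Fin M) => ¬ H2 ≠ F₀) = {F₀} := by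
      ext H2
      simp [not_not]
    rw [hsingle, Finset.sum_singleton, sum_tIndW_all hW M] at hsplit
    linarith
  calc ∑ H ∈ Finset.univ.filter
        (fun H : SimpleGraph (Fin (r + M)) => H ∈ P (r + M)), tIndW H W
      ≤ ∑ H ∈ s, tIndW H W := step1
    _ = ∑ y ∈ cset, ∑ H ∈ s.filter (fun H => g H = y), tIndW H W := hsum_cset
    _ = ∑ y ∈ cset, tIndW y.1 W * tIndW y.2 W :=
        Finset.sum_congr rfl hfiber_eval
    _ = _ := by rw [hprod, hcompl]

lemma decay {W : ℝ → ℝ → ℝ} (hW : IsGraphon W)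
    (P : ∀ n : ℕ, Set (SimpleGraph (Fin n))) (hP : Hereditary P)
    {M : ℕ} (hM : 0 < M) (F₀ : SimpleGraph (Fin M)) (hF₀ : F₀ ∉ P M)
    (ht : 0 < tIndW F₀ W) :
    Tendsto (fun n : ℕ =>
        ∑ H ∈ Finset.univ.filter (fun H : SimpleGraph (Fin n) => H ∈ P n), tIndW H W)
      atTop (nhds 0) := by
  classical
  set A : ℕ → ℝ := fun n =>
    ∑ H ∈ Finset.univ.filter (fun H : SimpleGraph (Fin n) => H ∈ P n), tIndW H W with hA
  set c : ℝ := 1 - tIndW F₀ W with hc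
  have hc0 : 0 ≤ c := by
    rw [hc]
    linarith [tIndW_le_one hW F₀]
  have hc1 : c < 1 := by
    rw [hc]
    linarith
  have hA0 : ∀ n, 0 ≤ A n := by
    intro n
    exact Finset.sum_nonneg (fun H _ => tIndW_nonneg hW H)
  have hA1 : ∀ n, A n ≤ 1 := fun n => sum_tIndW_subset_le_one hW _
  have hpow : ∀ q r, A (r + q * M) ≤ c ^ q := by
    intro q
    induction q with
    | zero => intro r; simpa using hA1 r
    | succ q ih =>
        intro r
        have hidx : r + (q + 1) * M = (r + q * M) + M := by ring
        rw [hidx]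
        calc A ((r + q * M) + M) ≤ A (r + q * M) * c := recursion hW P hP F₀ hF₀ (r + q * M)
          _ ≤ c ^ q * c := mul_le_mul_of_nonneg_right (ih r) hc0
          _ = c ^ (q + 1) := by rw [pow_succ]
  rw [Metric.tendsto_atTop]
  intro ε hε
  obtain ⟨Q, hQ⟩ := Metric.tendsto_atTop.mp (tendsto_pow_atTop_nhds_zero_of_lt_one hc0 hc1) ε hε
  have hQε : c ^ Q < ε := by
    have := hQ Q (le_refl _)
    rwa [Real.dist_eq, sub_zero, abs_of_nonneg (pow_nonneg hc0 _)] at this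
  refine ⟨Q * M, fun n hn => ?_⟩
  rw [Real.dist_eq, sub_zero, abs_of_nonneg (hA0 n)]
  have hdecomp : n = (n - Q * M) + Q * M := by omega
  calc A n = A ((n - Q * M) + Q * M) := by rw [← hdecomp]
    _ ≤ c ^ Q := hpow Q (n - Q * M)
    _ < ε := hQε

end GP

/-- If `P` is hereditary and no sequence of graphs in `P` converges to the
graphon `W`, then the probability that the `W`-random graph `G(n,W)` lies in `P`, i.e. the sum
of `t_ind(H,W)` over labelled graphs `H` on `{1,…,n}` belonging to `P`, tends to `0`. -/
theorem prob_random_graph_in_class_tendsto_zero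
    (P : ∀ n : ℕ, Set (SimpleGraph (Fin n))) (hP : Hereditary P)
    (W : ℝ → ℝ → ℝ) (hW : IsGraphon W)
    (hnot : ¬ ∃ G : ℕ → Σ n : ℕ, SimpleGraph (Fin n),
        (∀ k, (G k).2 ∈ P (G k).1) ∧ ConvergesTo G W) :
    Tendsto
      (fun n : ℕ =>
        ∑ H ∈ Finset.univ.filter (fun H : SimpleGraph (Fin n) => H ∈ P n), tIndW H W)
      atTop (nhds 0) := by
  classical
  by_cases hz : ∀ (m : ℕ) (F : SimpleGraph (Fin m)), F ∉ P m → tIndW F W = 0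
  · exact absurd (GP.exists_conv_seq hW P hz) hnot
  · push_neg at hz
    obtain ⟨M, F₀, hF₀, htne⟩ := hz
    have ht : 0 < tIndW F₀ W := lt_of_le_of_ne (GP.tIndW_nonneg hW F₀) (Ne.symm htne)
    rcases Nat.eq_zero_or_pos M with hM0 | hM
    · subst hM0
      have hempty : ∀ n (H : SimpleGraph (Fin n)), H ∉ P n := by
        intro n H hH
        apply hF₀
        exact hP 0 n F₀ H hH
          ⟨⟨fun x => x.elim0, fun x => x.elim0⟩, fun u => u.elim0⟩
      have hfe : ∀ n, (Finset.univ.filter (fun H : SimpleGraph (Fin n) => H ∈ P n)) = ∅ := by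
        intro n
        ext H
        simp [hempty n H]
      simp_rw [hfe, Finset.sum_empty]
      exact tendsto_const_nhds
    · exact GP.decay hW P hP hM F₀ hF₀ ht
end
end

section
/- Let ℱ be a (finite or infinite) family of finite simple graphs and let 𝒰_ℱ be the class of all finite simple graphs containing no induced subgraph isomorphic to any member of ℱ. Let W be a graphon. Then there exists a sequence (G_n) of graphs in 𝒰_ℱ converging to W if and only if t_ind(F,W) = 0 for every F ∈ ℱ. -/
open MeasureTheory Filter
open scoped Classical
noncomputable section

/-- base measure on [0,1] -/
def mzero : Measure ℝ := volume.restrict (Set.Icc (0:ℝ) 1)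

instance : IsProbabilityMeasure mzero := ⟨by simp [mzero, Real.volume_Icc]⟩

/-- box measure -/
def bm (ι : Type*) [Fintype ι] : Measure (ι → ℝ) := Measure.pi fun _ => mzero

instance (ι : Type*) [Fintype ι] : IsProbabilityMeasure (bm ι) := by
  unfold bm; infer_instance

lemma pi_biInter {β ι : Type*} [Fintype ι] (A : Finset β) (c : β → ι)
    (hc : ∀ p ∈ A, ∀ q ∈ A, c p = c q → p = q) (S : β → Set ℝ)
    (hS : ∀ p ∈ A, MeasurableSet (S p)) :
    (bm ι) (⋂ p ∈ A, (fun u : ι → ℝ => u (c p)) ⁻¹' S p) = ∏ p ∈ A, mzero (S p) := by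
  set T : ι → Set ℝ := fun k => ⋂ p ∈ A.filter (fun p => c p = k), S p with hT
  have hset : (⋂ p ∈ A, (fun u : ι → ℝ => u (c p)) ⁻¹' S p) = Set.pi Set.univ T := by
    ext u
    simp only [Set.mem_iInter, Set.mem_preimage, Set.mem_pi, Set.mem_univ, true_implies, hT,
      Finset.mem_filter]
    constructor
    · rintro h k p ⟨hp, rfl⟩; exact h p hp
    · intro h p hp; exact h (c p) p ⟨hp, rfl⟩
  rw [hset]
  show Measure.pi _ _ = _
  rw [Measure.pi_pi]
  have h1 : ∀ k ∈ Finset.univ, k ∉ A.image c → mzero (T k) = 1 := by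
    intro k _ hk
    have he : A.filter (fun p => c p = k) = ∅ := by
      rw [Finset.filter_eq_empty_iff]
      intro p hp hck; exact hk (Finset.mem_image.2 ⟨p, hp, hck⟩)
    have hTk : T k = Set.univ := by simp only [hT]; rw [he]; simp
    rw [hTk]; exact measure_univ
  calc ∏ k, mzero (T k) = ∏ k ∈ A.image c, mzero (T k) :=
        (Finset.prod_subset (Finset.subset_univ _) h1).symm
    _ = ∏ p ∈ A, mzero (T (c p)) := Finset.prod_image hc
    _ = ∏ p ∈ A, mzero (S p) := by
        refine Finset.prod_congr rfl fun p hp => ?_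
        congr 1
        have : A.filter (fun q => c q = c p) = {p} := by
          ext q
          simp only [Finset.mem_filter, Finset.mem_singleton]
          constructor
          · rintro ⟨hq, hcq⟩; exact hc q hq p hp hcq
          · rintro rfl; exact ⟨hp, rfl⟩
        simp only [hT]; rw [this]; simp

lemma bm_map {ι κ : Type*} [Fintype ι] [Fintype κ] (φ : ι ↪ κ) :
    MeasurePreserving (fun x : κ → ℝ => x ∘ φ) (bm κ) (bm ι) := by
  have mφ : Measurable (fun x : κ → ℝ => x ∘ φ) :=
    measurable_pi_lambda _ fun i => measurable_pi_apply _
  refine ⟨mφ, ?_⟩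
  refine (Measure.pi_eq (μ := fun _ : ι => mzero) fun s hs => ?_).symm
  rw [Measure.map_apply mφ (MeasurableSet.univ_pi hs)]
  have : (fun x : κ → ℝ => x ∘ φ) ⁻¹' Set.pi Set.univ s
      = ⋂ i ∈ (Finset.univ : Finset ι), (fun u : κ → ℝ => u (φ i)) ⁻¹' s i := by
    ext x; simp [Set.mem_pi]
  rw [this, pi_biInter (Finset.univ) (fun i => φ i)
    (fun p _ q _ h => φ.injective h) s (fun p _ => hs p)]

/-! ### chunk 2: random graphs and the master event-measure lemma -/

lemma mzero_Iio {w : ℝ} (h : w ∈ Set.Icc (0:ℝ) 1) : mzero (Set.Iio w) = ENNReal.ofReal w := by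
  rw [mzero, Measure.restrict_apply measurableSet_Iio]
  have : Set.Iio w ∩ Set.Icc 0 1 = Set.Ico 0 w := by
    ext z
    simp only [Set.mem_inter_iff, Set.mem_Iio, Set.mem_Icc, Set.mem_Ico]
    exact ⟨fun ⟨h1, h2, _⟩ => ⟨h2, h1⟩, fun ⟨h1, h2⟩ => ⟨h2, h1, le_trans (le_of_lt h2) h.2⟩⟩
  rw [this, Real.volume_Ico, sub_zero]

lemma mzero_Ici {w : ℝ} (h : w ∈ Set.Icc (0:ℝ) 1) : mzero (Set.Ici w) = ENNReal.ofReal (1 - w) := by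
  rw [mzero, Measure.restrict_apply measurableSet_Ici]
  have : Set.Ici w ∩ Set.Icc 0 1 = Set.Icc w 1 := by
    ext z
    simp only [Set.mem_inter_iff, Set.mem_Ici, Set.mem_Icc]
    exact ⟨fun ⟨h1, _, h3⟩ => ⟨h1, h3⟩, fun ⟨h1, h2⟩ => ⟨h1, h.1.trans h1, h2⟩⟩
  rw [this, Real.volume_Icc]

lemma ae_cube (ι : Type*) [Fintype ι] : ∀ᵐ x ∂(bm ι), ∀ i, x i ∈ Set.Icc (0:ℝ) 1 := by
  have h1 : MeasurableSet {x : ι → ℝ | ∀ i, x i ∈ Set.Icc (0:ℝ) 1} := by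
    have : {x : ι → ℝ | ∀ i, x i ∈ Set.Icc (0:ℝ) 1} = Set.pi Set.univ (fun _ => Set.Icc 0 1) := by
      ext x; simp only [Set.mem_pi, Set.mem_univ, true_implies, Set.mem_setOf_eq]
    rw [this]; exact MeasurableSet.univ_pi fun _ => measurableSet_Icc
  rw [MeasureTheory.ae_iff]
  have h2 : (bm ι) {x : ι → ℝ | ∀ i, x i ∈ Set.Icc (0:ℝ) 1} = 1 := by
    have : {x : ι → ℝ | ∀ i, x i ∈ Set.Icc (0:ℝ) 1} = Set.pi Set.univ (fun _ => Set.Icc 0 1) := by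
      ext x; simp only [Set.mem_pi, Set.mem_univ, true_implies, Set.mem_setOf_eq]
    rw [this]
    show Measure.pi _ _ = 1
    rw [Measure.pi_pi]
    have : mzero (Set.Icc (0:ℝ) 1) = 1 := by simp [mzero, Real.volume_Icc]
    simp [this]
  have := measure_compl h1 (measure_ne_top (bm ι) _)
  rw [h2] at this
  simpa [Set.compl_setOf] using this.trans (by simp)

/-- sorted pair -/
def sp {n : ℕ} (i j : Fin n) : Fin n × Fin n := if i ≤ j then (i, j) else (j, i)

lemma sp_comm {n : ℕ} {i j : Fin n} (h : i ≠ j) : sp i j = sp j i := by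
  rcases lt_or_gt_of_ne h with h' | h'
  · rw [sp, sp, if_pos h'.le, if_neg (not_le.2 h')]
  · rw [sp, sp, if_neg (not_le.2 h'), if_pos h'.le]

lemma sp_cases {n : ℕ} (i j : Fin n) : sp i j = (i, j) ∨ sp i j = (j, i) := by
  rw [sp]; split_ifs <;> simp

/-- the sample space -/
abbrev SampSp (n : ℕ) := (Fin n → ℝ) × (Fin n × Fin n → ℝ)

/-- the probability measure on the sample space -/
def Ωm (n : ℕ) : Measure (SampSp n) := (bm (Fin n)).prod (bm (Fin n × Fin n))

instance (n : ℕ) : IsProbabilityMeasure (Ωm n) := by unfold Ωm; infer_instance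

/-- the W-random graph -/
def Gr (W : ℝ → ℝ → ℝ) {n : ℕ} (ω : SampSp n) : SimpleGraph (Fin n) where
  Adj i j := i ≠ j ∧ ω.2 (sp i j) < W (ω.1 (sp i j).1) (ω.1 (sp i j).2)
  symm := ⟨by rintro i j ⟨h1, h2⟩; exact ⟨h1.symm, by rwa [← sp_comm h1]⟩⟩
  loopless := ⟨fun i h => h.1 rfl⟩

/-- a single coin event -/
def coinEvent (W : ℝ → ℝ → ℝ) {n : ℕ} (c : Fin n × Fin n) (b : Prop) : Set (SampSp n) :=
  {ω | (ω.2 c < W (ω.1 c.1) (ω.1 c.2)) ↔ b}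

lemma coinEvent_meas {W : ℝ → ℝ → ℝ} (hWm : Measurable (Function.uncurry W)) {n : ℕ}
    (c : Fin n × Fin n) (b : Prop) : MeasurableSet (coinEvent W c b) := by
  have hf : Measurable fun ω : SampSp n => ω.2 c :=
    (measurable_pi_apply c).comp measurable_snd
  have hg : Measurable fun ω : SampSp n => W (ω.1 c.1) (ω.1 c.2) := by
    have hpair : Measurable fun ω : SampSp n => (ω.1 c.1, ω.1 c.2) :=
      ((measurable_pi_apply c.1).comp measurable_fst).prodMk
        ((measurable_pi_apply c.2).comp measurable_fst)
    exact hWm.comp hpair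
  have hlt : MeasurableSet {ω : SampSp n | ω.2 c < W (ω.1 c.1) (ω.1 c.2)} :=
    measurableSet_lt hf hg
  by_cases hb : b
  · have : coinEvent W c b = {ω : SampSp n | ω.2 c < W (ω.1 c.1) (ω.1 c.2)} := by
      ext ω; simp [coinEvent, hb]
    rw [this]; exact hlt
  · have : coinEvent W c b = {ω : SampSp n | ω.2 c < W (ω.1 c.1) (ω.1 c.2)}ᶜ := by
      ext ω; simp [coinEvent, hb]
    rw [this]; exact hlt.compl

/-- Master lemma: measure of an intersection of coin events with distinct coins. -/
lemma master {W : ℝ → ℝ → ℝ} (hW : IsGraphon W) {n : ℕ} {β : Type*} (A : Finset β)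
    (c : β → Fin n × Fin n) (hc : ∀ p ∈ A, ∀ q ∈ A, c p = c q → p = q) (b : β → Prop) :
    Ωm n (⋂ p ∈ A, coinEvent W (c p) (b p)) =
      ∫⁻ x, ∏ p ∈ A, ENNReal.ofReal
        (if b p then W (x (c p).1) (x (c p).2) else 1 - W (x (c p).1) (x (c p).2))
        ∂(bm (Fin n)) := by
  obtain ⟨hWm, hWs, hWr⟩ := hW
  have hSmeas : MeasurableSet (⋂ p ∈ A, coinEvent W (c p) (b p)) :=
    MeasurableSet.biInter A.countable_toSet fun p _ => coinEvent_meas hWm _ _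
  rw [Ωm, Measure.prod_apply hSmeas]
  refine lintegral_congr_ae ?_
  filter_upwards [ae_cube (Fin n)] with x hx
  have hsec : (Prod.mk x ⁻¹' ⋂ p ∈ A, coinEvent W (c p) (b p)) =
      ⋂ p ∈ A, (fun u : Fin n × Fin n → ℝ => u (c p)) ⁻¹'
        (if b p then Set.Iio (W (x (c p).1) (x (c p).2)) else Set.Ici (W (x (c p).1) (x (c p).2))) := by
    ext u
    simp only [Set.mem_preimage, Set.mem_iInter, coinEvent, Set.mem_setOf_eq]
    refine forall₂_congr fun p hp => ?_
    by_cases hb : b p <;> simp [hb, not_lt]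
  rw [hsec, pi_biInter A c hc _ (fun p _ => by split_ifs <;> [exact measurableSet_Iio; exact measurableSet_Ici])]
  refine Finset.prod_congr rfl fun p _ => ?_
  have hw : W (x (c p).1) (x (c p).2) ∈ Set.Icc (0:ℝ) 1 := hWr _ _ (hx _) (hx _)
  by_cases hb : b p
  · simp only [hb, if_pos, if_true]; exact mzero_Iio hw
  · simp only [hb, if_neg, if_false]; exact mzero_Ici hw

/-! ### chunk 3: embedding events and their probabilities -/
open scoped ENNReal

/-- ordered pairs -/
def OP (m : ℕ) : Finset (Fin m × Fin m) := Finset.univ.filter (fun p => p.1 < p.2)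

def gg (W : ℝ → ℝ → ℝ) {m : ℕ} (F : SimpleGraph (Fin m)) (p : Fin m × Fin m)
    (y : Fin m → ℝ) : ℝ :=
  if F.Adj p.1 p.2 then W (y p.1) (y p.2) else 1 - W (y p.1) (y p.2)

lemma tIndW_eq (W : ℝ → ℝ → ℝ) {m : ℕ} (F : SimpleGraph (Fin m)) :
    tIndW F W = ∫ y, ∏ p ∈ OP m, gg W F p y ∂(bm (Fin m)) := rfl

lemma gg_meas {W : ℝ → ℝ → ℝ} (hWm : Measurable (Function.uncurry W)) {m : ℕ}
    (F : SimpleGraph (Fin m)) (p : Fin m × Fin m) : Measurable (gg W F p) := by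
  have h1 : Measurable fun y : Fin m → ℝ => W (y p.1) (y p.2) := by
    have hpair : Measurable fun y : Fin m → ℝ => (y p.1, y p.2) :=
      (measurable_pi_apply p.1).prodMk (measurable_pi_apply p.2)
    exact hWm.comp hpair
  unfold gg
  by_cases hb : F.Adj p.1 p.2
  · simpa [hb] using h1
  · simpa [hb] using h1.const_sub 1

/-- the ENNReal integrand -/
def Gfun (W : ℝ → ℝ → ℝ) {m : ℕ} (F : SimpleGraph (Fin m)) (y : Fin m → ℝ) : ℝ≥0∞ :=
  ∏ p ∈ OP m, ENNReal.ofReal (gg W F p y)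

lemma Gfun_meas {W : ℝ → ℝ → ℝ} (hWm : Measurable (Function.uncurry W)) {m : ℕ}
    (F : SimpleGraph (Fin m)) : Measurable (Gfun W F) :=
  Finset.measurable_prod _ fun p _ => ENNReal.measurable_ofReal.comp (gg_meas hWm F p)

lemma Gfun_le_one {W : ℝ → ℝ → ℝ} (hW : IsGraphon W) {m : ℕ} (F : SimpleGraph (Fin m))
    {y : Fin m → ℝ} (hy : ∀ i, y i ∈ Set.Icc (0:ℝ) 1) : Gfun W F y ≤ 1 := by
  calc Gfun W F y ≤ ∏ _p ∈ OP m, (1:ℝ≥0∞) := by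
        refine Finset.prod_le_prod' fun p _ => ?_
        have h := hW.2.2 (y p.1) (y p.2) (hy _) (hy _)
        rw [gg]
        split_ifs with hb
        · exact ENNReal.ofReal_le_one.2 h.2
        · exact ENNReal.ofReal_le_one.2 (by linarith [h.1])
    _ = 1 := Finset.prod_const_one

lemma gg_nonneg {W : ℝ → ℝ → ℝ} (hW : IsGraphon W) {m : ℕ} (F : SimpleGraph (Fin m))
    (p : Fin m × Fin m) {y : Fin m → ℝ} (hy : ∀ i, y i ∈ Set.Icc (0:ℝ) 1) : 0 ≤ gg W F p y := by
  have h := hW.2.2 (y p.1) (y p.2) (hy _) (hy _)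
  rw [gg]; split_ifs with hb
  · exact h.1
  · linarith [h.2]

lemma lint_Gfun_le_one {W : ℝ → ℝ → ℝ} (hW : IsGraphon W) {m : ℕ} (F : SimpleGraph (Fin m)) :
    ∫⁻ y, Gfun W F y ∂(bm (Fin m)) ≤ 1 := by
  calc ∫⁻ y, Gfun W F y ∂(bm (Fin m)) ≤ ∫⁻ _y, 1 ∂(bm (Fin m)) := by
        refine lintegral_mono_ae ?_
        filter_upwards [ae_cube (Fin m)] with y hy using Gfun_le_one hW F hy
    _ = 1 := by simp

lemma lint_Gfun {W : ℝ → ℝ → ℝ} (hW : IsGraphon W) {m : ℕ} (F : SimpleGraph (Fin m)) :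
    ∫⁻ y, Gfun W F y ∂(bm (Fin m)) = ENNReal.ofReal (tIndW F W) := by
  have hmeasint : Measurable fun y => ∏ p ∈ OP m, gg W F p y :=
    Finset.measurable_prod _ fun p _ => gg_meas hW.1 F p
  have hnn : 0 ≤ᵐ[bm (Fin m)] fun y => ∏ p ∈ OP m, gg W F p y := by
    filter_upwards [ae_cube (Fin m)] with y hy
    exact Finset.prod_nonneg fun p _ => gg_nonneg hW F p hy
  have h1 : tIndW F W = (∫⁻ y, ENNReal.ofReal (∏ p ∈ OP m, gg W F p y) ∂(bm (Fin m))).toReal := by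
    rw [tIndW_eq]
    exact integral_eq_lintegral_of_nonneg_ae hnn hmeasint.aestronglyMeasurable
  have h2 : ∫⁻ y, ENNReal.ofReal (∏ p ∈ OP m, gg W F p y) ∂(bm (Fin m))
      = ∫⁻ y, Gfun W F y ∂(bm (Fin m)) := by
    refine lintegral_congr_ae ?_
    filter_upwards [ae_cube (Fin m)] with y hy
    exact ENNReal.ofReal_prod_of_nonneg fun p _ => gg_nonneg hW F p hy
  rw [h1, h2, ENNReal.ofReal_toReal]
  exact ne_top_of_le_ne_top ENNReal.one_ne_top (lint_Gfun_le_one hW F)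

lemma tIndW_nonneg {W : ℝ → ℝ → ℝ} (hW : IsGraphon W) {m : ℕ} (F : SimpleGraph (Fin m)) :
    0 ≤ tIndW F W := by
  rw [tIndW_eq]
  refine integral_nonneg_of_ae ?_
  filter_upwards [ae_cube (Fin m)] with y hy
  exact Finset.prod_nonneg fun p _ => gg_nonneg hW F p hy

/-- the event that `φ` realises an induced copy of `F` in the random graph -/
def EmbEvent (W : ℝ → ℝ → ℝ) {m n : ℕ} (F : SimpleGraph (Fin m)) (φ : Fin m ↪ Fin n) :
    Set (SampSp n) :=
  {ω | ∀ u v, (Gr W ω).Adj (φ u) (φ v) ↔ F.Adj u v}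

lemma embEvent_eq (W : ℝ → ℝ → ℝ) {m n : ℕ} (F : SimpleGraph (Fin m)) (φ : Fin m ↪ Fin n) :
    EmbEvent W F φ = ⋂ p ∈ OP m, coinEvent W (sp (φ p.1) (φ p.2)) (F.Adj p.1 p.2) := by
  ext ω
  simp only [EmbEvent, Set.mem_setOf_eq, Set.mem_iInter, coinEvent, OP, Finset.mem_filter,
    Finset.mem_univ, true_and]
  constructor
  · rintro h p hp
    have hne : φ p.1 ≠ φ p.2 := fun he => (ne_of_lt hp) (φ.injective he)
    constructor
    · intro hc; exact (h p.1 p.2).1 ⟨hne, hc⟩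
    · intro hF; exact ((h p.1 p.2).2 hF).2
  · intro h u v
    rcases lt_trichotomy u v with hlt | heq | hlt
    · have := h (u, v) hlt
      constructor
      · intro ha; exact this.1 ha.2
      · intro hF; exact ⟨fun he => absurd (φ.injective he) (ne_of_lt hlt), this.2 hF⟩
    · subst heq
      exact iff_of_false (SimpleGraph.irrefl _) (SimpleGraph.irrefl _)
    · have := h (v, u) hlt
      rw [SimpleGraph.adj_comm, F.adj_comm]
      constructor
      · intro ha; exact this.1 ha.2
      · intro hF; exact ⟨fun he => absurd (φ.injective he) (ne_of_lt hlt), this.2 hF⟩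

lemma embEvent_meas {W : ℝ → ℝ → ℝ} (hWm : Measurable (Function.uncurry W)) {m n : ℕ}
    (F : SimpleGraph (Fin m)) (φ : Fin m ↪ Fin n) : MeasurableSet (EmbEvent W F φ) := by
  rw [embEvent_eq]
  exact MeasurableSet.biInter (OP m).countable_toSet fun p _ => coinEvent_meas hWm _ _

lemma sp_inj_aux {m n : ℕ} (φ : Fin m ↪ Fin n) :
    ∀ p ∈ OP m, ∀ q ∈ OP m, sp (φ p.1) (φ p.2) = sp (φ q.1) (φ q.2) → p = q := by
  rintro ⟨p1, p2⟩ hp ⟨q1, q2⟩ hq heq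
  simp only [OP, Finset.mem_filter, Finset.mem_univ, true_and] at hp hq
  rcases sp_cases (φ p1) (φ p2) with h1 | h1 <;> rcases sp_cases (φ q1) (φ q2) with h2 | h2 <;>
    rw [h1, h2, Prod.mk.injEq] at heq <;>
    obtain ⟨e1, e2⟩ := heq
  · rw [φ.injective e1, φ.injective e2]
  · exact absurd (φ.injective e1 ▸ φ.injective e2 ▸ hq) (by rw [φ.injective e1, φ.injective e2] at hp ⊢; omega)
  · exact absurd hq (by rw [← φ.injective e1, ← φ.injective e2] at hq ⊢; omega)
  · rw [φ.injective e1, φ.injective e2]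

lemma sp_W_symm {W : ℝ → ℝ → ℝ} (hWs : ∀ x y, W x y = W y x) {n : ℕ} (x : Fin n → ℝ)
    (i j : Fin n) : W (x (sp i j).1) (x (sp i j).2) = W (x i) (x j) := by
  rcases sp_cases i j with h | h <;> rw [h]
  exact hWs _ _

/-- Lemma A: the probability that `φ` gives an induced copy of `F` equals `t_ind(F,W)`. -/
lemma embEvent_measure {W : ℝ → ℝ → ℝ} (hW : IsGraphon W) {m n : ℕ}
    (F : SimpleGraph (Fin m)) (φ : Fin m ↪ Fin n) :
    Ωm n (EmbEvent W F φ) = ENNReal.ofReal (tIndW F W) := by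
  rw [embEvent_eq, master hW (OP m) (fun p => sp (φ p.1) (φ p.2)) (sp_inj_aux φ)
    (fun p => F.Adj p.1 p.2)]
  rw [← lint_Gfun hW F, ← (bm_map φ).lintegral_comp (Gfun_meas hW.1 F)]
  refine lintegral_congr fun x => ?_
  refine Finset.prod_congr rfl fun p _ => ?_
  congr 1
  rw [gg]
  congr 1 <;> rw [sp_W_symm hW.2.1 x (φ p.1) (φ p.2)] <;> rfl

/-! ### chunk 4: pair probability for disjoint embeddings -/

lemma sp_fst_mem {n : ℕ} (i j : Fin n) : (sp i j).1 = i ∨ (sp i j).1 = j := by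
  rcases sp_cases i j with h | h <;> rw [h] <;> simp

lemma embEvent_pair_measure {W : ℝ → ℝ → ℝ} (hW : IsGraphon W) {m n : ℕ}
    (F : SimpleGraph (Fin m)) (φ ψ : Fin m ↪ Fin n) (hd : ∀ i j, φ i ≠ ψ j) :
    Ωm n (EmbEvent W F φ ∩ EmbEvent W F ψ) =
      ENNReal.ofReal (tIndW F W) * ENNReal.ofReal (tIndW F W) := by
  classical
  set c : (Fin m × Fin m) ⊕ (Fin m × Fin m) → Fin n × Fin n :=
    Sum.elim (fun p => sp (φ p.1) (φ p.2)) (fun p => sp (ψ p.1) (ψ p.2)) with hc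
  set b : (Fin m × Fin m) ⊕ (Fin m × Fin m) → Prop :=
    Sum.elim (fun p => F.Adj p.1 p.2) (fun p => F.Adj p.1 p.2) with hb
  have hset : EmbEvent W F φ ∩ EmbEvent W F ψ =
      ⋂ p ∈ (OP m).disjSum (OP m), coinEvent W (c p) (b p) := by
    rw [embEvent_eq W F φ, embEvent_eq W F ψ]
    ext ω
    simp only [Set.mem_inter_iff, Set.mem_iInter]
    constructor
    · rintro ⟨h1, h2⟩ p hp
      rcases Finset.mem_disjSum.1 hp with ⟨a, ha, rfl⟩ | ⟨a, ha, rfl⟩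
      · exact h1 a ha
      · exact h2 a ha
    · intro h
      exact ⟨fun p hp => h (Sum.inl p) (Finset.inl_mem_disjSum.2 hp),
        fun p hp => h (Sum.inr p) (Finset.inr_mem_disjSum.2 hp)⟩
  have hspφ : ∀ p : Fin m × Fin m, ∃ i j, sp (φ p.1) (φ p.2) = (φ i, φ j) := by
    rintro ⟨p1, p2⟩
    rcases sp_cases (φ p1) (φ p2) with h | h
    · exact ⟨p1, p2, h⟩
    · exact ⟨p2, p1, h⟩
  have hspψ : ∀ p : Fin m × Fin m, ∃ i j, sp (ψ p.1) (ψ p.2) = (ψ i, ψ j) := by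
    rintro ⟨p1, p2⟩
    rcases sp_cases (ψ p1) (ψ p2) with h | h
    · exact ⟨p1, p2, h⟩
    · exact ⟨p2, p1, h⟩
  have hinj : ∀ p ∈ (OP m).disjSum (OP m), ∀ q ∈ (OP m).disjSum (OP m), c p = c q → p = q := by
    rintro (p | p) hp (q | q) hq heq
    · rw [sp_inj_aux φ p (Finset.inl_mem_disjSum.1 hp) q (Finset.inl_mem_disjSum.1 hq) heq]
    · exfalso
      obtain ⟨i, j, hij⟩ := hspφ p
      obtain ⟨i', j', hij'⟩ := hspψ q
      simp only [hc, Sum.elim_inl, Sum.elim_inr, hij, hij', Prod.mk.injEq] at heq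
      exact hd i i' heq.1
    · exfalso
      obtain ⟨i, j, hij⟩ := hspψ p
      obtain ⟨i', j', hij'⟩ := hspφ q
      simp only [hc, Sum.elim_inl, Sum.elim_inr, hij, hij', Prod.mk.injEq] at heq
      exact hd i' i heq.1.symm
    · rw [sp_inj_aux ψ p (Finset.inr_mem_disjSum.1 hp) q (Finset.inr_mem_disjSum.1 hq) heq]
  rw [hset, master hW _ c hinj b]
  have hprod : ∀ x : Fin n → ℝ,
      (∏ p ∈ (OP m).disjSum (OP m), ENNReal.ofReal
        (if b p then W (x (c p).1) (x (c p).2) else 1 - W (x (c p).1) (x (c p).2)))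
      = Gfun W F (x ∘ φ) * Gfun W F (x ∘ ψ) := by
    intro x
    rw [Finset.prod_disjSum]
    congr 1
    · refine Finset.prod_congr rfl fun p _ => ?_
      simp only [hc, hb, Sum.elim_inl]
      congr 1
      rw [gg]
      congr 1 <;> rw [sp_W_symm hW.2.1 x (φ p.1) (φ p.2)] <;> rfl
    · refine Finset.prod_congr rfl fun p _ => ?_
      simp only [hc, hb, Sum.elim_inr]
      congr 1
      rw [gg]
      congr 1 <;> rw [sp_W_symm hW.2.1 x (ψ p.1) (ψ p.2)] <;> rfl
  simp_rw [hprod]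
  -- now factor the integral
  have hχinj : Function.Injective (Sum.elim (⇑φ) (⇑ψ) : Fin m ⊕ Fin m → Fin n) := by
    rintro (i | i) (j | j) h
    · rw [φ.injective h]
    · exact absurd h (hd i j)
    · exact absurd h.symm (hd j i)
    · rw [ψ.injective h]
  set χ : Fin m ⊕ Fin m ↪ Fin n := ⟨Sum.elim (⇑φ) (⇑ψ), hχinj⟩ with hχ
  have hH : Measurable fun z : Fin m ⊕ Fin m → ℝ =>
      Gfun W F (z ∘ Sum.inl) * Gfun W F (z ∘ Sum.inr) := by
    have h1 : Measurable fun z : Fin m ⊕ Fin m → ℝ => z ∘ Sum.inl :=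
      measurable_pi_lambda _ fun i => measurable_pi_apply _
    have h2 : Measurable fun z : Fin m ⊕ Fin m → ℝ => z ∘ Sum.inr :=
      measurable_pi_lambda _ fun i => measurable_pi_apply _
    exact ((Gfun_meas hW.1 F).comp h1).mul ((Gfun_meas hW.1 F).comp h2)
  have step1 : ∫⁻ x, Gfun W F (x ∘ φ) * Gfun W F (x ∘ ψ) ∂(bm (Fin n))
      = ∫⁻ z, Gfun W F (z ∘ Sum.inl) * Gfun W F (z ∘ Sum.inr) ∂(bm (Fin m ⊕ Fin m)) := by
    rw [← (bm_map χ).lintegral_comp hH]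
    rfl
  have step2 : ∫⁻ z, Gfun W F (z ∘ Sum.inl) * Gfun W F (z ∘ Sum.inr) ∂(bm (Fin m ⊕ Fin m))
      = ∫⁻ w, Gfun W F w.1 * Gfun W F w.2 ∂((bm (Fin m)).prod (bm (Fin m))) := by
    have mp := measurePreserving_sumPiEquivProdPi
      (X := fun _ : Fin m ⊕ Fin m => ℝ) (fun _ => mzero)
    have hm2 : Measurable fun w : (Fin m → ℝ) × (Fin m → ℝ) => Gfun W F w.1 * Gfun W F w.2 :=
      ((Gfun_meas hW.1 F).comp measurable_fst).mul ((Gfun_meas hW.1 F).comp measurable_snd)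
    have e1 : (bm (Fin m)).prod (bm (Fin m)) =
        ((Measure.pi fun _ : Fin m => mzero).prod (Measure.pi fun _ : Fin m => mzero)) := rfl
    rw [e1, ← mp.lintegral_comp hm2]
    rfl
  rw [step1, step2, lintegral_prod_mul (Gfun_meas hW.1 F).aemeasurable
    (Gfun_meas hW.1 F).aemeasurable, lint_Gfun hW F]

/-! ### chunk 5: counting embeddings -/

lemma card_emb (m n : ℕ) : Fintype.card (Fin m ↪ Fin n) = n.descFactorial m := by
  rw [Fintype.card_embedding_eq, Fintype.card_fin, Fintype.card_fin]

lemma card_disjoint_emb {m n : ℕ} (φ : Fin m ↪ Fin n) :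
    Fintype.card {ψ : Fin m ↪ Fin n // ∀ i j, φ i ≠ ψ j} = (n - m).descFactorial m := by
  classical
  have e : {ψ : Fin m ↪ Fin n // ∀ i j, φ i ≠ ψ j} ≃ (Fin m ↪ {k : Fin n // k ∉ Set.range φ}) :=
    { toFun := fun ⟨ψ, h⟩ =>
        ⟨fun j => ⟨ψ j, by rintro ⟨i, hi⟩; exact h i j hi⟩,
         fun a b hab => ψ.injective (congrArg Subtype.val hab)⟩
      invFun := fun χ =>
        ⟨⟨fun j => (χ j).1, fun a b h => χ.injective (Subtype.ext h)⟩,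
         fun i j hij => (χ j).2 ⟨i, hij⟩⟩
      left_inv := fun ⟨ψ, h⟩ => by ext j; rfl
      right_inv := fun χ => by ext j; rfl }
  rw [Fintype.card_congr e, Fintype.card_embedding_eq, Fintype.card_fin]
  congr 1
  have : Fintype.card {k : Fin n // k ∈ Set.range φ} = m := by
    simp only [Set.mem_range]
    have : Fintype.card {k : Fin n // ∃ y, φ y = k} = Fintype.card (Set.range φ) := by
      apply Fintype.card_congr; apply Equiv.subtypeEquivRight; intro k; simp [Set.mem_range]
    rw [this, Fintype.card_range φ, Fintype.card_fin]
  calc Fintype.card {k : Fin n // k ∉ Set.range φ}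
      = Fintype.card (Fin n) - Fintype.card {k : Fin n // k ∈ Set.range φ} :=
        Fintype.card_subtype_compl _
    _ = n - m := by rw [this, Fintype.card_fin]

lemma card_disjoint_filter {m n : ℕ} (φ : Fin m ↪ Fin n) :
    (Finset.univ.filter fun ψ : Fin m ↪ Fin n => ∀ i j, φ i ≠ ψ j).card
      = (n - m).descFactorial m := by
  classical
  rw [← Fintype.card_subtype, card_disjoint_emb φ]

/-! ### chunk 6: the density random variable and its moments -/

/-- the induced density of `F` in the random graph, as a function on the sample space -/
def XV (W : ℝ → ℝ → ℝ) {n m : ℕ} (F : SimpleGraph (Fin m)) (ω : SampSp n) : ℝ :=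
  tIndG F (Gr W ω)

lemma XV_eq (W : ℝ → ℝ → ℝ) {n m : ℕ} (F : SimpleGraph (Fin m)) (ω : SampSp n) :
    XV W F ω = (∑ φ : Fin m ↪ Fin n, if ω ∈ EmbEvent W F φ then (1:ℝ) else 0)
      / (n.descFactorial m : ℝ) := by
  rw [XV, tIndG]
  congr 1
  rw [Finset.card_filter]
  push_cast
  refine Finset.sum_congr rfl fun φ _ => ?_
  by_cases h : ∀ u v, (Gr W ω).Adj (φ u) (φ v) ↔ F.Adj u v
  · simp [h, EmbEvent, Set.mem_setOf_eq]
  · simp [h, EmbEvent, Set.mem_setOf_eq]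

lemma XV_meas {W : ℝ → ℝ → ℝ} (hWm : Measurable (Function.uncurry W)) {n m : ℕ}
    (F : SimpleGraph (Fin m)) : Measurable (XV W F (n := n)) := by
  have : XV W F (n := n) = fun ω =>
      (∑ φ : Fin m ↪ Fin n, if ω ∈ EmbEvent W F φ then (1:ℝ) else 0)
        / (n.descFactorial m : ℝ) := funext fun ω => XV_eq W F ω
  rw [this]
  refine Measurable.div ?_ measurable_const
  refine Finset.measurable_sum _ fun φ _ => ?_
  have : (fun ω => if ω ∈ EmbEvent W F φ then (1:ℝ) else 0)
      = (EmbEvent W F φ).indicator (fun _ => (1:ℝ)) := by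
    funext ω; rw [Set.indicator_apply]
  rw [this]
  exact measurable_const.indicator (embEvent_meas hWm F φ)

lemma XV_mem {W : ℝ → ℝ → ℝ} {n m : ℕ} (F : SimpleGraph (Fin m)) (ω : SampSp n) :
    XV W F ω ∈ Set.Icc (0:ℝ) 1 := by
  rw [XV, tIndG]
  constructor
  · positivity
  · rcases Nat.eq_zero_or_pos (n.descFactorial m) with h | h
    · simp [h]
    · rw [div_le_one (by exact_mod_cast h)]
      have := Finset.card_filter_le (Finset.univ : Finset (Fin m ↪ Fin n))
        (fun φ => ∀ u v, (Gr W ω).Adj (φ u) (φ v) ↔ F.Adj u v)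
      have hcard : (Finset.univ : Finset (Fin m ↪ Fin n)).card = n.descFactorial m := by
        rw [Finset.card_univ, card_emb]
      exact_mod_cast hcard ▸ this

lemma integrable_of_bdd {n : ℕ} {f : SampSp n → ℝ} (hm : Measurable f) (C : ℝ)
    (hb : ∀ ω, |f ω| ≤ C) : Integrable f (Ωm n) :=
  (integrable_const C).mono' hm.aestronglyMeasurable (Eventually.of_forall hb)

lemma indicator_integrable {W : ℝ → ℝ → ℝ} (hWm : Measurable (Function.uncurry W)) {n m : ℕ}
    (F : SimpleGraph (Fin m)) (φ : Fin m ↪ Fin n) :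
    Integrable (fun ω : SampSp n => if ω ∈ EmbEvent W F φ then (1:ℝ) else 0) (Ωm n) := by
  have h1 : (fun ω : SampSp n => if ω ∈ EmbEvent W F φ then (1:ℝ) else 0)
      = (EmbEvent W F φ).indicator (fun _ => (1:ℝ)) := by
    funext ω; rw [Set.indicator_apply]
  refine integrable_of_bdd ?_ 1 fun ω => by split_ifs <;> simp
  rw [h1]; exact measurable_const.indicator (embEvent_meas hWm F φ)

lemma EX {W : ℝ → ℝ → ℝ} (hW : IsGraphon W) {n m : ℕ} (F : SimpleGraph (Fin m)) (hmn : m ≤ n) :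
    ∫ ω, XV W F ω ∂(Ωm n) = tIndW F W := by
  have hD : (0:ℝ) < (n.descFactorial m : ℝ) := by
    exact_mod_cast Nat.pos_of_ne_zero fun h => absurd (Nat.descFactorial_eq_zero_iff_lt.1 h) (not_lt.2 hmn)
  have h1 : ∀ ω, XV W F ω = (∑ φ : Fin m ↪ Fin n, if ω ∈ EmbEvent W F φ then (1:ℝ) else 0)
      / (n.descFactorial m : ℝ) := XV_eq W F
  simp_rw [h1]
  rw [integral_div, integral_finset_sum _ fun φ _ => indicator_integrable hW.1 F φ]
  have h2 : ∀ φ : Fin m ↪ Fin n,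
      ∫ ω, (if ω ∈ EmbEvent W F φ then (1:ℝ) else 0) ∂(Ωm n) = tIndW F W := by
    intro φ
    have h3 : (fun ω : SampSp n => if ω ∈ EmbEvent W F φ then (1:ℝ) else 0)
        = (EmbEvent W F φ).indicator 1 := by
      funext ω; rw [Set.indicator_apply]; rfl
    rw [h3, integral_indicator_one (embEvent_meas hW.1 F φ), measureReal_def, embEvent_measure hW F φ,
      ENNReal.toReal_ofReal (tIndW_nonneg hW F)]
  simp_rw [h2, Finset.sum_const, Finset.card_univ, card_emb, nsmul_eq_mul]
  field_simp

lemma EY {W : ℝ → ℝ → ℝ} (hW : IsGraphon W) {n m : ℕ} (F : SimpleGraph (Fin m)) (hmn : m ≤ n) :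
    ∫ ω, (XV W F ω - tIndW F W)^2 ∂(Ωm n)
      ≤ 1 - ((n - m).descFactorial m : ℝ) / (n.descFactorial m : ℝ) := by
  classical
  set t := tIndW F W with ht
  set D := (n.descFactorial m : ℝ) with hDdef
  set d := ((n - m).descFactorial m : ℝ) with hddef
  have hD : (0:ℝ) < D := by
    rw [hDdef]
    exact_mod_cast Nat.pos_of_ne_zero fun h => absurd (Nat.descFactorial_eq_zero_iff_lt.1 h) (not_lt.2 hmn)
  have hdD : d ≤ D := by rw [hddef, hDdef]; exact_mod_cast Nat.descFactorial_le m (Nat.sub_le n m)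
  have hd0 : 0 ≤ d := by positivity
  have ht0 : 0 ≤ t := tIndW_nonneg hW F
  have hXmeas := XV_meas hW.1 (n := n) F
  have hXint : Integrable (XV W F) (Ωm n) :=
    integrable_of_bdd hXmeas 1 fun ω =>
      abs_le.2 ⟨le_trans (by norm_num : (-1:ℝ) ≤ 0) (XV_mem (W := W) F ω).1, (XV_mem (W := W) F ω).2⟩
  have hX2int : Integrable (fun ω => XV W F ω ^ 2) (Ωm n) := by
    refine integrable_of_bdd (hXmeas.pow_const 2) 1 fun ω => ?_
    have h := XV_mem (W := W) F ω
    rw [abs_of_nonneg (by positivity)]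
    nlinarith [h.1, h.2]
  -- expand the square
  have hexp : ∀ ω : SampSp n, (XV W F ω - t)^2 = XV W F ω ^ 2 - 2 * t * XV W F ω + t ^ 2 := by
    intro ω; ring
  have hsubint : Integrable (fun ω => XV W F ω ^ 2 - 2 * t * XV W F ω) (Ωm n) := by
    exact hX2int.sub (hXint.const_mul (2 * t))
  have hmulint : Integrable (fun ω => 2 * t * XV W F ω) (Ωm n) := by
    exact hXint.const_mul (2 * t)
  have hint : ∫ ω, (XV W F ω - t)^2 ∂(Ωm n)
      = (∫ ω, XV W F ω ^ 2 ∂(Ωm n)) - 2 * t * t + t ^ 2 := by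
    simp_rw [hexp]
    rw [integral_add hsubint (integrable_const _), integral_sub hX2int hmulint,
      integral_const_mul, EX hW F hmn, ← ht, integral_const]
    simp
  rw [hint]
  -- second moment bound
  have hsq : ∀ ω : SampSp n, XV W F ω ^ 2 =
      (∑ q : (Fin m ↪ Fin n) × (Fin m ↪ Fin n),
        if ω ∈ EmbEvent W F q.1 ∩ EmbEvent W F q.2 then (1:ℝ) else 0) / D ^ 2 := by
    intro ω
    rw [XV_eq, div_pow, pow_two, Finset.sum_mul_sum]
    congr 1
    rw [Fintype.sum_prod_type]
    refine Finset.sum_congr rfl fun φ _ => Finset.sum_congr rfl fun ψ _ => ?_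
    by_cases h1 : ω ∈ EmbEvent W F φ <;> by_cases h2 : ω ∈ EmbEvent W F ψ <;>
      simp [h1, h2]
  have hpairint : ∀ q : (Fin m ↪ Fin n) × (Fin m ↪ Fin n),
      Integrable (fun ω : SampSp n =>
        if ω ∈ EmbEvent W F q.1 ∩ EmbEvent W F q.2 then (1:ℝ) else 0) (Ωm n) := by
    intro q
    have h1 : (fun ω : SampSp n => if ω ∈ EmbEvent W F q.1 ∩ EmbEvent W F q.2 then (1:ℝ) else 0)
        = (EmbEvent W F q.1 ∩ EmbEvent W F q.2).indicator (fun _ => (1:ℝ)) := by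
      funext ω; rw [Set.indicator_apply]
    refine integrable_of_bdd ?_ 1 fun ω => by split_ifs <;> simp
    rw [h1]
    exact measurable_const.indicator ((embEvent_meas hW.1 F q.1).inter (embEvent_meas hW.1 F q.2))
  have hEX2 : ∫ ω, XV W F ω ^ 2 ∂(Ωm n)
      = (∑ q : (Fin m ↪ Fin n) × (Fin m ↪ Fin n),
          (Ωm n (EmbEvent W F q.1 ∩ EmbEvent W F q.2)).toReal) / D ^ 2 := by
    simp_rw [hsq]
    rw [integral_div, integral_finset_sum _ fun q _ => hpairint q]
    congr 1
    refine Finset.sum_congr rfl fun q _ => ?_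
    have h3 : (fun ω : SampSp n => if ω ∈ EmbEvent W F q.1 ∩ EmbEvent W F q.2 then (1:ℝ) else 0)
        = (EmbEvent W F q.1 ∩ EmbEvent W F q.2).indicator 1 := by
      funext ω; rw [Set.indicator_apply]; rfl
    rw [h3, integral_indicator_one ((embEvent_meas hW.1 F q.1).inter (embEvent_meas hW.1 F q.2)), measureReal_def]
  -- bound each term
  have hterm : ∀ q : (Fin m ↪ Fin n) × (Fin m ↪ Fin n),
      (Ωm n (EmbEvent W F q.1 ∩ EmbEvent W F q.2)).toReal
        ≤ if (∀ i j, q.1 i ≠ q.2 j) then t^2 else 1 := by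
    rintro ⟨φ, ψ⟩
    by_cases hdis : ∀ i j, φ i ≠ ψ j
    · rw [if_pos hdis, embEvent_pair_measure hW F φ ψ hdis, ← ENNReal.ofReal_mul ht0,
        ENNReal.toReal_ofReal (by positivity), sq]
    · rw [if_neg hdis]
      exact ENNReal.toReal_mono ENNReal.one_ne_top prob_le_one
  have hsum : (∑ q : (Fin m ↪ Fin n) × (Fin m ↪ Fin n),
      (Ωm n (EmbEvent W F q.1 ∩ EmbEvent W F q.2)).toReal)
      ≤ D * (d * t^2 + (D - d)) := by
    calc (∑ q : (Fin m ↪ Fin n) × (Fin m ↪ Fin n),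
        (Ωm n (EmbEvent W F q.1 ∩ EmbEvent W F q.2)).toReal)
        ≤ ∑ q : (Fin m ↪ Fin n) × (Fin m ↪ Fin n), if (∀ i j, q.1 i ≠ q.2 j) then t^2 else 1 :=
          Finset.sum_le_sum fun q _ => hterm q
      _ = ∑ φ : Fin m ↪ Fin n, ∑ ψ : Fin m ↪ Fin n, if (∀ i j, φ i ≠ ψ j) then t^2 else 1 :=
          Fintype.sum_prod_type _
      _ = ∑ _φ : Fin m ↪ Fin n, (d * t^2 + (D - d)) := by
          refine Finset.sum_congr rfl fun φ _ => ?_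
          rw [Finset.sum_ite, Finset.sum_const, Finset.sum_const, card_disjoint_filter φ]
          have hcards : (Finset.univ.filter fun ψ : Fin m ↪ Fin n => ¬ ∀ i j, φ i ≠ ψ j).card
              = n.descFactorial m - (n - m).descFactorial m := by
            have := Finset.card_filter_add_card_filter_not
              (s := (Finset.univ : Finset (Fin m ↪ Fin n)))
              (p := fun ψ : Fin m ↪ Fin n => ∀ i j, φ i ≠ ψ j)
            rw [card_disjoint_filter φ, Finset.card_univ, card_emb] at this
            omega
          rw [hcards, nsmul_eq_mul, nsmul_eq_mul]
          have hle : (n - m).descFactorial m ≤ n.descFactorial m :=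
            Nat.descFactorial_le m (Nat.sub_le n m)
          rw [Nat.cast_sub hle]
          rw [← hDdef, ← hddef]
          ring
      _ = D * (d * t^2 + (D - d)) := by
          rw [Finset.sum_const, Finset.card_univ, card_emb, nsmul_eq_mul, ← hDdef]
  have hX2le : ∫ ω, XV W F ω ^ 2 ∂(Ωm n) ≤ (d * t^2 + (D - d)) / D := by
    rw [hEX2]
    rw [div_le_div_iff₀ (by positivity) hD]
    calc (∑ q : (Fin m ↪ Fin n) × (Fin m ↪ Fin n),
        (Ωm n (EmbEvent W F q.1 ∩ EmbEvent W F q.2)).toReal) * D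
        ≤ (D * (d * t^2 + (D - d))) * D := by
          exact mul_le_mul_of_nonneg_right hsum hD.le
      _ = (d * t ^ 2 + (D - d)) * D ^ 2 := by ring
  have hr1 : d / D ≤ 1 := (div_le_one hD).2 hdD
  have hr0 : 0 ≤ d / D := by positivity
  have hfinal : (d * t^2 + (D - d)) / D = (d/D) * t^2 + 1 - d/D := by
    field_simp
    ring
  nlinarith [hX2le, sq_nonneg t]

/-! ### chunk 7: Chebyshev, null events, existence of good graphs -/

lemma tIndW_le_one {W : ℝ → ℝ → ℝ} (hW : IsGraphon W) {m : ℕ} (F : SimpleGraph (Fin m)) :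
    tIndW F W ≤ 1 := by
  have h1 := lint_Gfun hW F
  have h2 := lint_Gfun_le_one hW F
  rw [h1] at h2
  exact ENNReal.ofReal_le_one.1 h2

lemma cheb {W : ℝ → ℝ → ℝ} (hW : IsGraphon W) {n m : ℕ} (F : SimpleGraph (Fin m))
    (hmn : m ≤ n) {ε : ℝ} (hε : 0 < ε) :
    Ωm n {ω | ε ≤ |XV W F ω - tIndW F W|}
      ≤ ENNReal.ofReal ((1 - ((n - m).descFactorial m : ℝ) / (n.descFactorial m : ℝ)) / ε^2) := by
  set t := tIndW F W with ht
  set δ := 1 - ((n - m).descFactorial m : ℝ) / (n.descFactorial m : ℝ) with hδ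
  have hD : (0:ℝ) < (n.descFactorial m : ℝ) := by
    exact_mod_cast Nat.pos_of_ne_zero fun h => absurd (Nat.descFactorial_eq_zero_iff_lt.1 h) (not_lt.2 hmn)
  have hδ0 : 0 ≤ δ := by
    have hdD : ((n - m).descFactorial m : ℝ) ≤ (n.descFactorial m : ℝ) := by
      exact_mod_cast Nat.descFactorial_le m (Nat.sub_le n m)
    have := (div_le_one hD).2 hdD
    rw [hδ]; linarith
  have ht01 : 0 ≤ t ∧ t ≤ 1 := ⟨tIndW_nonneg hW F, tIndW_le_one hW F⟩
  have hXmeas := XV_meas hW.1 (n := n) F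
  have hYmeas : Measurable fun ω : SampSp n => (XV W F ω - t)^2 :=
    (hXmeas.sub measurable_const).pow_const 2
  have hYint : Integrable (fun ω : SampSp n => (XV W F ω - t)^2) (Ωm n) := by
    refine integrable_of_bdd hYmeas 1 fun ω => ?_
    have h := XV_mem (W := W) F ω
    rw [abs_of_nonneg (sq_nonneg _)]
    nlinarith [h.1, h.2, ht01.1, ht01.2]
  have hsub : {ω : SampSp n | ε ≤ |XV W F ω - t|}
      ⊆ {ω : SampSp n | ENNReal.ofReal (ε^2) ≤ ENNReal.ofReal ((XV W F ω - t)^2)} := by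
    intro ω hω
    simp only [Set.mem_setOf_eq] at hω ⊢
    refine ENNReal.ofReal_le_ofReal ?_
    nlinarith [sq_abs (XV W F ω - t), abs_nonneg (XV W F ω - t)]
  have hmarkov := meas_ge_le_lintegral_div
    (μ := Ωm n) (f := fun ω => ENNReal.ofReal ((XV W F ω - t)^2))
    (ENNReal.measurable_ofReal.comp hYmeas).aemeasurable
    (ε := ENNReal.ofReal (ε^2)) (by simp [ENNReal.ofReal_eq_zero, not_le]; positivity)
    ENNReal.ofReal_ne_top
  have hlint : ∫⁻ ω, ENNReal.ofReal ((XV W F ω - t)^2) ∂(Ωm n) ≤ ENNReal.ofReal δ := by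
    rw [← ofReal_integral_eq_lintegral_ofReal hYint (Eventually.of_forall fun ω => sq_nonneg _)]
    exact ENNReal.ofReal_le_ofReal (EY hW F hmn)
  calc Ωm n {ω | ε ≤ |XV W F ω - t|}
      ≤ Ωm n {ω : SampSp n | ENNReal.ofReal (ε^2) ≤ ENNReal.ofReal ((XV W F ω - t)^2)} :=
        measure_mono hsub
    _ ≤ (∫⁻ ω, ENNReal.ofReal ((XV W F ω - t)^2) ∂(Ωm n)) / ENNReal.ofReal (ε^2) := hmarkov
    _ ≤ ENNReal.ofReal δ / ENNReal.ofReal (ε^2) := ENNReal.div_le_div_right hlint _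
    _ = ENNReal.ofReal (δ / ε^2) := (ENNReal.ofReal_div_of_pos (by positivity)).symm

instance countable_sg (m : ℕ) : Countable (SimpleGraph (Fin m)) :=
  Function.Injective.countable (f := fun G : SimpleGraph (Fin m) => G.Adj)
    fun G H h => SimpleGraph.ext h

lemma forb_null {W : ℝ → ℝ → ℝ} (hW : IsGraphon W) {n m : ℕ} (F : SimpleGraph (Fin m))
    (ht : tIndW F W = 0) : Ωm n {ω | IsInducedSubgraph F (Gr W ω)} = 0 := by
  have hset : {ω : SampSp n | IsInducedSubgraph F (Gr W ω)} = ⋃ φ : Fin m ↪ Fin n, EmbEvent W F φ := by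
    ext ω; simp [IsInducedSubgraph, EmbEvent, Set.mem_iUnion]
  rw [hset]
  refine measure_iUnion_null fun φ => ?_
  rw [embEvent_measure hW F φ, ht, ENNReal.ofReal_zero]

lemma good_graph {W : ℝ → ℝ → ℝ} (hW : IsGraphon W)
    (ℱ : ∀ n : ℕ, Set (SimpleGraph (Fin n)))
    (ht0 : ∀ (m : ℕ), ∀ F ∈ ℱ m, tIndW F W = 0)
    (k : ℕ) (e : ℕ → Σ m : ℕ, SimpleGraph (Fin m)) {ε : ℝ} (hε : 0 < ε) (n : ℕ)
    (hc1 : ∀ j ≤ k, (e j).1 ≤ n)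
    (hc2 : ∑ j ∈ Finset.range (k+1),
      (1 - ((n - (e j).1).descFactorial (e j).1 : ℝ) / (n.descFactorial (e j).1 : ℝ)) / ε^2 < 1) :
    ∃ H : SimpleGraph (Fin n), (∀ (m : ℕ), ∀ F ∈ ℱ m, ¬ IsInducedSubgraph F H) ∧
      ∀ j ≤ k, |tIndG (e j).2 H - tIndW (e j).2 W| < ε := by
  classical
  set N : Set (SampSp n) := ⋃ s : Σ m : ℕ, SimpleGraph (Fin m),
    {ω | s.2 ∈ ℱ s.1 ∧ IsInducedSubgraph s.2 (Gr W ω)} with hN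
  have hNnull : Ωm n N = 0 := by
    refine measure_iUnion_null fun s => ?_
    by_cases hs : s.2 ∈ ℱ s.1
    · refine measure_mono_null (fun ω hω => hω.2) (forb_null hW s.2 (ht0 s.1 s.2 hs))
    · have : {ω : SampSp n | s.2 ∈ ℱ s.1 ∧ IsInducedSubgraph s.2 (Gr W ω)} = ∅ := by
        ext ω; simp [hs]
      rw [this]; exact measure_empty
  set A : ℕ → Set (SampSp n) := fun j => {ω | ε ≤ |XV W (e j).2 ω - tIndW (e j).2 W|} with hA
  set bad : Set (SampSp n) := N ∪ ⋃ j ∈ Finset.range (k+1), A j with hbad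
  have hmeas_bad : Ωm n bad < 1 := by
    have h1 : Ωm n bad ≤ Ωm n N + Ωm n (⋃ j ∈ Finset.range (k+1), A j) := measure_union_le _ _
    have h2 : Ωm n (⋃ j ∈ Finset.range (k+1), A j) ≤ ∑ j ∈ Finset.range (k+1), Ωm n (A j) :=
      measure_biUnion_finset_le _ _
    have h3 : ∑ j ∈ Finset.range (k+1), Ωm n (A j)
        ≤ ∑ j ∈ Finset.range (k+1), ENNReal.ofReal
          ((1 - ((n - (e j).1).descFactorial (e j).1 : ℝ) / (n.descFactorial (e j).1 : ℝ)) / ε^2) :=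
      Finset.sum_le_sum fun j hj => cheb hW (e j).2 (hc1 j (Nat.lt_succ_iff.1 (Finset.mem_range.1 hj))) hε
    have hnn : ∀ j ∈ Finset.range (k+1), 0 ≤
        (1 - ((n - (e j).1).descFactorial (e j).1 : ℝ) / (n.descFactorial (e j).1 : ℝ)) / ε^2 := by
      intro j hj
      have hmn := hc1 j (Nat.lt_succ_iff.1 (Finset.mem_range.1 hj))
      have hD : (0:ℝ) < (n.descFactorial (e j).1 : ℝ) := by
        exact_mod_cast Nat.pos_of_ne_zero fun h =>
          absurd (Nat.descFactorial_eq_zero_iff_lt.1 h) (not_lt.2 hmn)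
      have hdD : ((n - (e j).1).descFactorial (e j).1 : ℝ) ≤ (n.descFactorial (e j).1 : ℝ) := by
        exact_mod_cast Nat.descFactorial_le (e j).1 (Nat.sub_le n (e j).1)
      have := (div_le_one hD).2 hdD
      apply div_nonneg (by linarith) (by positivity)
    have h4 : ∑ j ∈ Finset.range (k+1), ENNReal.ofReal
        ((1 - ((n - (e j).1).descFactorial (e j).1 : ℝ) / (n.descFactorial (e j).1 : ℝ)) / ε^2)
        = ENNReal.ofReal (∑ j ∈ Finset.range (k+1),
          (1 - ((n - (e j).1).descFactorial (e j).1 : ℝ) / (n.descFactorial (e j).1 : ℝ)) / ε^2) :=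
      (ENNReal.ofReal_sum_of_nonneg hnn).symm
    calc Ωm n bad ≤ Ωm n N + Ωm n (⋃ j ∈ Finset.range (k+1), A j) := h1
      _ = Ωm n (⋃ j ∈ Finset.range (k+1), A j) := by rw [hNnull, zero_add]
      _ ≤ ∑ j ∈ Finset.range (k+1), Ωm n (A j) := h2
      _ ≤ _ := h3
      _ = _ := h4
      _ < 1 := ENNReal.ofReal_lt_one.2 hc2
  obtain ⟨ω, hω⟩ : ∃ ω : SampSp n, ω ∉ bad := by
    by_contra h
    push_neg at h
    have : bad = Set.univ := Set.eq_univ_of_forall h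
    rw [this, measure_univ] at hmeas_bad
    exact lt_irrefl _ hmeas_bad
  refine ⟨Gr W ω, ?_, ?_⟩
  · intro m F hF hInd
    exact hω (Or.inl (Set.mem_iUnion.2 ⟨⟨m, F⟩, hF, hInd⟩))
  · intro j hj
    have hωA : ω ∉ A j := fun hA' =>
      hω (Or.inr (Set.mem_biUnion (Finset.mem_range.2 (Nat.lt_succ_iff.2 hj)) hA'))
    simp only [hA, Set.mem_setOf_eq] at hωA
    exact not_le.1 hωA

/-! ### chunk 8: asymptotics and the main theorem -/

lemma delta_tendsto (m : ℕ) :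
    Tendsto (fun n : ℕ => 1 - ((n - m).descFactorial m : ℝ) / (n.descFactorial m : ℝ))
      atTop (nhds 0) := by
  have hratio : Tendsto (fun n : ℕ => ((n - m).descFactorial m : ℝ) / (n.descFactorial m : ℝ))
      atTop (nhds 1) := by
    have heq : ∀ᶠ n : ℕ in atTop,
        ((n - m).descFactorial m : ℝ) / (n.descFactorial m : ℝ)
          = ∏ i ∈ Finset.range m, (1 - (m:ℝ) / ((n:ℝ) - i)) := by
      filter_upwards [eventually_ge_atTop (2*m + 1)] with n hn
      have hcast1 : ((n.descFactorial m : ℕ) : ℝ) = ∏ i ∈ Finset.range m, ((n - i : ℕ) : ℝ) := by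
        rw [Nat.descFactorial_eq_prod_range]; push_cast; rfl
      have hcast2 : (((n - m).descFactorial m : ℕ) : ℝ)
          = ∏ i ∈ Finset.range m, ((n - m - i : ℕ) : ℝ) := by
        rw [Nat.descFactorial_eq_prod_range]; push_cast; rfl
      rw [hcast1, hcast2, ← Finset.prod_div_distrib]
      refine Finset.prod_congr rfl fun i hi => ?_
      have him : i < m := Finset.mem_range.1 hi
      have h1 : ((n - m - i : ℕ) : ℝ) = (n:ℝ) - m - i := by
        have : m + i ≤ n := by omega
        rw [Nat.sub_sub, Nat.cast_sub this]; push_cast; ring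
      have h2 : ((n - i : ℕ) : ℝ) = (n:ℝ) - i := by
        rw [Nat.cast_sub (by omega)]
      have h3 : (0:ℝ) < (n:ℝ) - i := by
        have : (i:ℝ) < n := by exact_mod_cast (by omega : i < n)
        linarith
      rw [h1, h2]
      field_simp
      ring
    have hlim : Tendsto (fun n : ℕ => ∏ i ∈ Finset.range m, (1 - (m:ℝ) / ((n:ℝ) - i)))
        atTop (nhds (∏ _i ∈ Finset.range m, (1:ℝ))) := by
      refine tendsto_finset_prod _ fun i _ => ?_
      have hbot : Tendsto (fun n : ℕ => (n:ℝ) - i) atTop atTop := by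
        have := tendsto_atTop_add_const_right atTop (-(i:ℝ)) tendsto_natCast_atTop_atTop
        refine this.congr fun n => by ring
      have hd : Tendsto (fun n : ℕ => (m:ℝ) / ((n:ℝ) - i)) atTop (nhds 0) :=
        Tendsto.div_atTop tendsto_const_nhds hbot
      have := tendsto_const_nhds (x := (1:ℝ)) (f := atTop (α := ℕ)) |>.sub hd
      simpa using this
    have heq' : (fun n : ℕ => ∏ i ∈ Finset.range m, (1 - (m:ℝ) / ((n:ℝ) - i)))
        =ᶠ[atTop] (fun n : ℕ => ((n - m).descFactorial m : ℝ) / (n.descFactorial m : ℝ)) := by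
      filter_upwards [heq] with n h using h.symm
    have := hlim.congr' heq'
    simpa using this
  have := tendsto_const_nhds (x := (1:ℝ)) (f := atTop (α := ℕ)) |>.sub hratio
  simpa using this

/-- For a family `ℱ` of graphs, a graphon `W` is a limit of graphs containing
no induced subgraph isomorphic to a member of `ℱ` iff `t_ind(F, W) = 0` for every `F ∈ ℱ`. -/
theorem limit_of_forbidden_induced_iff
    (ℱ : ∀ n : ℕ, Set (SimpleGraph (Fin n)))
    (W : ℝ → ℝ → ℝ) (hW : IsGraphon W) :
    (∃ G : ℕ → Σ n : ℕ, SimpleGraph (Fin n),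
        (∀ k, ∀ (m : ℕ), ∀ F ∈ ℱ m, ¬ IsInducedSubgraph F (G k).2) ∧ ConvergesTo G W) ↔
    (∀ (m : ℕ), ∀ F ∈ ℱ m, tIndW F W = 0) := by
  constructor
  · rintro ⟨G, hGavoid, hGconv⟩ m F hF
    have h0 : ∀ k, tIndG F (G k).2 = 0 := by
      intro k
      have hempty : (Finset.univ.filter fun φ : Fin m ↪ Fin (G k).1 =>
          ∀ u v, (G k).2.Adj (φ u) (φ v) ↔ F.Adj u v) = ∅ :=
        Finset.filter_eq_empty_iff.2 fun {φ} _ hφ => hGavoid k m F hF ⟨φ, hφ⟩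
      rw [tIndG, hempty]
      simp
    have hconv := hGconv.2 m F
    have : Tendsto (fun _ : ℕ => (0:ℝ)) atTop (nhds (tIndW F W)) := by
      refine hconv.congr fun k => h0 k
    exact (tendsto_nhds_unique this tendsto_const_nhds)
  · intro ht0
    obtain ⟨e, he⟩ := exists_surjective_nat (Σ m : ℕ, SimpleGraph (Fin m))
    have hsel : ∀ k : ℕ, ∃ n : ℕ, k ≤ n ∧ ∃ H : SimpleGraph (Fin n),
        (∀ (m : ℕ), ∀ F ∈ ℱ m, ¬ IsInducedSubgraph F H) ∧
        ∀ j ≤ k, |tIndG (e j).2 H - tIndW (e j).2 W| < 1/((k:ℝ)+1) := by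
      intro k
      have hε : (0:ℝ) < 1/((k:ℝ)+1) := by positivity
      have hsum : Tendsto (fun n : ℕ => ∑ j ∈ Finset.range (k+1),
          (1 - ((n - (e j).1).descFactorial (e j).1 : ℝ) / (n.descFactorial (e j).1 : ℝ))
            / (1/((k:ℝ)+1))^2) atTop (nhds 0) := by
        have h := tendsto_finset_sum (Finset.range (k+1))
          (fun j _ => (delta_tendsto (e j).1).div_const ((1/((k:ℝ)+1))^2))
        simpa using h
      have hev1 : ∀ᶠ n : ℕ in atTop, ∑ j ∈ Finset.range (k+1),
          (1 - ((n - (e j).1).descFactorial (e j).1 : ℝ) / (n.descFactorial (e j).1 : ℝ))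
            / (1/((k:ℝ)+1))^2 < 1 := hsum.eventually_lt_const one_pos
      have hev2 : ∀ᶠ n : ℕ in atTop, ∀ j ∈ Finset.range (k+1), (e j).1 ≤ n :=
        (Finset.range (k+1)).eventually_all.2 fun j _ => eventually_ge_atTop _
      have hev3 : ∀ᶠ n : ℕ in atTop, k ≤ n := eventually_ge_atTop k
      obtain ⟨n, hn1, hn2, hn3⟩ := (hev1.and (hev2.and hev3)).exists
      refine ⟨n, hn3, ?_⟩
      exact good_graph hW ℱ ht0 k e hε n
        (fun j hj => hn2 j (Finset.mem_range.2 (Nat.lt_succ_iff.2 hj))) hn1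
    choose nseq hkn H hH1 hH2 using hsel
    refine ⟨fun k => ⟨nseq k, H k⟩, fun k => hH1 k, ?_, ?_⟩
    · exact tendsto_atTop_mono hkn tendsto_id
    · intro m F
      obtain ⟨j0, hj0⟩ := he ⟨m, F⟩
      rw [Metric.tendsto_atTop]
      intro ε hε
      obtain ⟨Nb, hNb⟩ := exists_nat_one_div_lt (K := ℝ) hε
      refine ⟨max j0 Nb, fun k hk => ?_⟩
      have hj0k : j0 ≤ k := le_trans (le_max_left _ _) hk
      have hNbk : Nb ≤ k := le_trans (le_max_right _ _) hk
      have h := hH2 k j0 hj0k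
      rw [hj0] at h
      have hmono : 1/((k:ℝ)+1) ≤ 1/((Nb:ℝ)+1) := by
        apply one_div_le_one_div_of_le (by positivity)
        have : (Nb:ℝ) ≤ (k:ℝ) := by exact_mod_cast hNbk
        linarith
      rw [Real.dist_eq]
      calc |tIndG F (H k) - tIndW F W| < 1/((k:ℝ)+1) := h
        _ ≤ 1/((Nb:ℝ)+1) := hmono
        _ < ε := hNb
end
end
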